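/- arXiv:0902.0529 — 9 statements merged into one kernel-verified Lean document; each statement's English description precedes it below -/
import Mathlib

section
/- Let l ≥ 3 and ν : ZMod l → ℤ × ℤ encode a smooth complete fan in ℤ². Then the following are equivalent: (a) for every u ∈ ℤ × ℤ there is no i ∈ ZMod l with ⟨ν i, u⟩ = −1, ⟨ν (i−1), u⟩ < 0 and ⟨ν (i+1), u⟩ < 0 (equivalently c_ν(u) = 0 for all u, which by the paper's T¹ formula says the associated smooth complete toric surface is rigid); (b) for every i ∈ ZMod l and every integer c with ν (i−1) + ν (i+1) = c • ν i one has c ≤ 1 (the combinatorial criterion that the associated toric surface is Fano). This is the combinatorial content of the paper's corollary: a smooth, complete toric surface is rigid if and only if it is Fano. -/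
/-- The pairing ⟨v, u⟩ = v.1 * u.1 + v.2 * u.2 between N = ℤ² and M = ℤ². -/
def pairing (v u : ℤ × ℤ) : ℤ := v.1 * u.1 + v.2 * u.2

/-- det(v, w) = v.1 * w.2 − v.2 * w.1. -/
def det2 (v w : ℤ × ℤ) : ℤ := v.1 * w.2 - v.2 * w.1

/-- View a lattice point in ℚ². -/
def toQ (v : ℤ × ℤ) : ℚ × ℚ := ((v.1 : ℚ), (v.2 : ℚ))

/-- The closed cone spanned by a and b. -/
def closedCone (a b : ℤ × ℤ) : Set (ℚ × ℚ) :=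
  {x | ∃ s t : ℚ, 0 ≤ s ∧ 0 ≤ t ∧ x = s • toQ a + t • toQ b}

/-- The open cone spanned by a and b. -/
def openCone (a b : ℤ × ℤ) : Set (ℚ × ℚ) :=
  {x | ∃ s t : ℚ, 0 < s ∧ 0 < t ∧ x = s • toQ a + t • toQ b}

/-- ν : ZMod l → ℤ × ℤ encodes a smooth complete fan in ℤ²:
(i) each successive pair of ray generators has determinant 1;
(ii) the closed two-dimensional cones cover ℚ²;
(iii) the open two-dimensional cones are pairwise disjoint. -/
structure IsSmoothCompleteFan {l : ℕ} (ν : ZMod l → ℤ × ℤ) : Prop where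
  det_one : ∀ i : ZMod l, det2 (ν i) (ν (i + 1)) = 1
  covers : ∀ x : ℚ × ℚ, ∃ i : ZMod l, x ∈ closedCone (ν i) (ν (i + 1))
  disjointOpen : ∀ i j : ZMod l, i ≠ j →
    Disjoint (openCone (ν i) (ν (i + 1))) (openCone (ν j) (ν (j + 1)))

/-!
Unimodularity of consecutive pairs gives the wall relation `ν (i-1) + ν (i+1) = c • ν i` with
`c = det (ν (i-1), ν (i+1))`, so `⟨ν (i-1), u⟩ + ⟨ν (i+1), u⟩ = c ⟨ν i, u⟩`.
If `⟨ν i, u⟩ = -1` and both neighbours pair negatively with `u`, the left side is at most `-2`,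
forcing `c ≥ 2`. Conversely, if `c ≥ 2`, the `u` with `⟨ν i, u⟩ = ⟨ν (i+1), u⟩ = -1` (it exists
since `ν i, ν (i+1)` is a basis) has `⟨ν (i-1), u⟩ = 1 - c < 0`.
-/

lemma add_eq_det2_smul_of_det2_eq_one {v w x : ℤ × ℤ} (hvw : det2 v w = 1) (hwx : det2 w x = 1) :
    v + x = det2 v x • w := by
  unfold det2 at *
  ext
  · simp only [Prod.fst_add, Prod.smul_fst, smul_eq_mul]
    linear_combination (-x.1) * hvw + (-v.1) * hwx
  · simp only [Prod.snd_add, Prod.smul_snd, smul_eq_mul]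
    linear_combination (-x.2) * hvw + (-v.2) * hwx

lemma exists_pairing_eq_neg_one_of_det2_eq_one {v w : ℤ × ℤ} (h : det2 v w = 1) :
    ∃ u : ℤ × ℤ, pairing v u = -1 ∧ pairing w u = -1 :=
  ⟨(v.2 - w.2, w.1 - v.1), by unfold pairing det2 at *; constructor <;> linarith⟩

lemma pairing_add_eq_of_add_eq_smul {v w x : ℤ × ℤ} {c : ℤ} (h : v + x = c • w) (u : ℤ × ℤ) :
    pairing v u + pairing x u = c * pairing w u := by
  have hu := congrArg (pairing · u) h
  simp only [pairing, Prod.fst_add, Prod.snd_add, Prod.smul_fst, Prod.smul_snd,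
    smul_eq_mul] at hu ⊢
  linear_combination hu

lemma IsSmoothCompleteFan.prev_add_next {l : ℕ} {ν : ZMod l → ℤ × ℤ}
    (hfan : IsSmoothCompleteFan ν) (i : ZMod l) :
    ν (i - 1) + ν (i + 1) = det2 (ν (i - 1)) (ν (i + 1)) • ν i := by
  have hprev := hfan.det_one (i - 1)
  rw [sub_add_cancel] at hprev
  exact add_eq_det2_smul_of_det2_eq_one hprev (hfan.det_one i)

theorem rigid_iff_fano_general (l : ℕ) (ν : ZMod l → ℤ × ℤ)
    (hfan : IsSmoothCompleteFan ν) :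
    (∀ u : ℤ × ℤ, ¬ ∃ i : ZMod l,
        pairing (ν i) u = -1 ∧ pairing (ν (i - 1)) u < 0 ∧ pairing (ν (i + 1)) u < 0)
    ↔ (∀ i : ZMod l, ∀ c : ℤ, ν (i - 1) + ν (i + 1) = c • ν i → c ≤ 1) := by
  constructor
  · intro hrigid i c hrel
    by_contra! hc
    obtain ⟨u, hi, hnext⟩ := exists_pairing_eq_neg_one_of_det2_eq_one (hfan.det_one i)
    have hwall := pairing_add_eq_of_add_eq_smul hrel u
    rw [hi, hnext] at hwall
    exact hrigid u ⟨i, hi, by linarith, by linarith⟩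
  · rintro hfano u ⟨i, hi, hprev, hnext⟩
    have hc := hfano i _ (hfan.prev_add_next i)
    have hwall := pairing_add_eq_of_add_eq_smul (hfan.prev_add_next i) u
    rw [hi] at hwall
    linarith

/-- A smooth, complete toric surface is rigid if and only if it is Fano:
(a) the combinatorial condition `c_ν(u) = 0` for all degrees u (rigidity, via the
paper's formula for T¹ of a smooth complete toric surface), is equivalent to
(b) for every ray i and c ∈ ℤ with ν(i−1) + ν(i+1) = c • ν i one has c ≤ 1 (Fano). -/
theorem rigid_iff_fano (l : ℕ) (hl : 3 ≤ l) (ν : ZMod l → ℤ × ℤ)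
    (hfan : IsSmoothCompleteFan ν) :
    (∀ u : ℤ × ℤ, ¬ ∃ i : ZMod l,
        pairing (ν i) u = -1 ∧ pairing (ν (i - 1)) u < 0 ∧ pairing (ν (i + 1)) u < 0)
    ↔ (∀ i : ZMod l, ∀ c : ℤ, ν (i - 1) + ν (i + 1) = c • ν i → c ≤ 1) :=
  rigid_iff_fano_general l ν hfan
end

section
/- Let l ≥ 3 and ν : ZMod l → ℤ × ℤ encode a smooth complete fan in ℤ², fix k with 0 ≤ k ≤ l−1, and let ν' : ZMod (l+1) → ℤ × ℤ be obtained from ν by inserting the vector ν k + ν (k+1) between positions k and k+1 (ν' j = ν j for 0 ≤ j ≤ k, ν' (k+1) = ν k + ν (k+1), ν' j = ν (j−1) for k+2 ≤ j ≤ l). Then for every u ∈ ℤ × ℤ one has c_ν(u) ≤ c_{ν'}(u). By the paper's T¹ formula this is the combinatorial content of the corollary: if Ỹ is an equivariant blow-up of a smooth complete toric surface Y, then T_Y^1 ⊆ T_{Ỹ}^1 as M-graded vector spaces. -/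
/-- c_ν(u) = #{i : ⟨ν i, u⟩ = −1, ⟨ν (i−1), u⟩ < 0, ⟨ν (i+1), u⟩ < 0}, which by the
paper's formula equals dim T¹_Y(u) for the associated smooth complete toric surface. -/
noncomputable def cCount {l : ℕ} (ν : ZMod l → ℤ × ℤ) (u : ℤ × ℤ) : ℕ :=
  {i : ZMod l | pairing (ν i) u = -1 ∧ pairing (ν (i - 1)) u < 0 ∧
    pairing (ν (i + 1)) u < 0}.ncard

/-! Blowing up the cone `σ_k` inserts the ray `ν k + ν (k + 1)` and leaves every other ray with
its old neighbours, except that `ν k` and `ν (k + 1)` now each have the new ray as a neighbour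
in place of the other. If `⟨ν i, u⟩ = -1` and the lost neighbour pairs negatively with `u`, so
does the sum of the two, hence each index counted by `c_ν(u)` is still counted by `c_{ν'}(u)`
at its new position. -/

open Function

theorem pairing_add_left (a b u : ℤ × ℤ) : pairing (a + b) u = pairing a u + pairing b u := by
  simp only [pairing, Prod.fst_add, Prod.snd_add]
  ring

theorem cCount_le_of_insert_sums {l m : ℕ} [NeZero m] {ν : ZMod l → ℤ × ℤ}
    {ν' : ZMod m → ℤ × ℤ} (u : ℤ × ℤ) (f : ZMod l → ZMod m) (hf : Injective f)
    (hν : ∀ i, ν' (f i) = ν i)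
    (hstep : ∀ i, f (i + 1) = f i + 1 ∨
      f (i + 1) = f i + 1 + 1 ∧ ν' (f i + 1) = ν i + ν (i + 1)) :
    cCount ν u ≤ cCount ν' u := by
  refine Set.ncard_le_ncard_of_injOn f ?_ hf.injOn
  rintro i ⟨hi, hprev, hnext⟩
  have hsum : ∀ {a b}, pairing a u < 0 → pairing b u < 0 → pairing (a + b) u < 0 := by
    intro a b ha hb
    rw [pairing_add_left]
    omega
  refine ⟨by rwa [hν], ?_, ?_⟩
  · rcases sub_add_cancel i 1 ▸ hstep (i - 1) with h | ⟨h, hins⟩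
    · rwa [h, add_sub_cancel_right, hν]
    · rw [h, add_sub_cancel_right, hins]
      exact hsum hprev (by omega)
  · rcases hstep i with h | ⟨_, hins⟩
    · rwa [← h, hν]
    · rw [hins]
      exact hsum (by omega) hnext

structure IsBlowupAt {l : ℕ} (k : ℕ) (ν : ZMod l → ℤ × ℤ) (ν' : ZMod (l + 1) → ℤ × ℤ) :
    Prop where
  apply_of_le : ∀ j : ℕ, j ≤ k → ν' (j : ZMod (l + 1)) = ν (j : ZMod l)
  apply_succ : ν' ((k + 1 : ℕ) : ZMod (l + 1)) = ν (k : ZMod l) + ν ((k + 1 : ℕ) : ZMod l)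
  apply_of_lt : ∀ j : ℕ, k + 2 ≤ j → j ≤ l → ν' (j : ZMod (l + 1)) = ν ((j - 1 : ℕ) : ZMod l)

def insertPos (k n : ℕ) : ℕ := if n ≤ k then n else n + 1

theorem insertPos_strictMono (k : ℕ) : StrictMono (insertPos k) := by
  intro a b hab
  unfold insertPos
  split_ifs <;> omega

theorem insertPos_le_succ (k n : ℕ) : insertPos k n ≤ n + 1 := by
  unfold insertPos
  split_ifs <;> omega

theorem insertPos_succ_of_ne {k n : ℕ} (h : n ≠ k) : insertPos k (n + 1) = insertPos k n + 1 := by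
  unfold insertPos
  split_ifs <;> omega

def blowupIndex {l : ℕ} (k : ℕ) (i : ZMod l) : ZMod (l + 1) := (insertPos k i.val : ℕ)

section Blowup

variable {l k : ℕ} {ν : ZMod l → ℤ × ℤ} {ν' : ZMod (l + 1) → ℤ × ℤ}

theorem blowupIndex_natCast {n : ℕ} (hn : n < l) :
    blowupIndex k (n : ZMod l) = (insertPos k n : ZMod (l + 1)) := by
  rw [blowupIndex, ZMod.val_cast_of_lt hn]

theorem blowupIndex_injective [NeZero l] : Injective (blowupIndex (l := l) k) := by
  intro a b hab
  have hlt : ∀ c : ZMod l, insertPos k c.val < l + 1 :=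
    fun c => (insertPos_le_succ k _).trans_lt (Nat.succ_lt_succ c.val_lt)
  have hval := congrArg ZMod.val hab
  rw [blowupIndex, blowupIndex, ZMod.val_cast_of_lt (hlt a), ZMod.val_cast_of_lt (hlt b)] at hval
  exact ZMod.val_injective _ ((insertPos_strictMono k).injective hval)

theorem blowupIndex_add_one (hk : k < l) {i : ZMod l} (hi : i ≠ k) :
    blowupIndex k (i + 1) = blowupIndex k i + 1 := by
  have : NeZero l := ⟨by omega⟩
  obtain ⟨n, hn, rfl⟩ : ∃ n < l, (n : ZMod l) = i := ⟨i.val, i.val_lt, i.natCast_zmod_val⟩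
  have hnk : n ≠ k := by rintro rfl; exact hi rfl
  rcases (Nat.succ_le_of_lt hn).lt_or_eq with hn' | hn'
  · rw [← Nat.cast_succ, blowupIndex_natCast hn', blowupIndex_natCast hn,
      insertPos_succ_of_ne hnk]
    push_cast; rfl
  · have hpos : insertPos k n = l := by unfold insertPos; split_ifs <;> omega
    rw [← Nat.cast_succ, hn', ZMod.natCast_self, blowupIndex_natCast hn, hpos,
      ← Nat.cast_zero, blowupIndex_natCast (by omega)]
    simp [insertPos]

theorem blowupIndex_natCast_add_one (hk : k < l) :
    blowupIndex k ((k : ZMod l) + 1) = blowupIndex k (k : ZMod l) + 1 + 1 := by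
  have hkk : insertPos k k = k := if_pos le_rfl
  rw [← Nat.cast_succ, blowupIndex_natCast hk, hkk]
  rcases (Nat.succ_le_of_lt hk).lt_or_eq with hk' | hk'
  · rw [blowupIndex_natCast hk', show insertPos k (k + 1) = k + 1 + 1 from if_neg (by omega)]
    push_cast; rfl
  · rw [hk', ZMod.natCast_self, ← Nat.cast_zero, blowupIndex_natCast (by omega), ← hk']
    exact_mod_cast (ZMod.natCast_self (k + 1 + 1)).symm

theorem IsBlowupAt.apply_blowupIndex [NeZero l] (h : IsBlowupAt k ν ν') (i : ZMod l) :
    ν' (blowupIndex k i) = ν i := by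
  obtain ⟨n, hn, rfl⟩ : ∃ n < l, (n : ZMod l) = i := ⟨i.val, i.val_lt, i.natCast_zmod_val⟩
  rw [blowupIndex_natCast hn, insertPos]
  split_ifs with hnk
  · exact h.apply_of_le n hnk
  · exact h.apply_of_lt (n + 1) (by omega) (by omega)

theorem IsBlowupAt.apply_blowupIndex_add_one (hk : k < l) (h : IsBlowupAt k ν ν') :
    ν' (blowupIndex k (k : ZMod l) + 1) = ν k + ν (k + 1) := by
  rw [blowupIndex_natCast hk, show insertPos k k = k from if_pos le_rfl, ← Nat.cast_succ,
    h.apply_succ, Nat.cast_succ]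

end Blowup

theorem t1_le_of_blowup_general (l : ℕ) (hl : 3 ≤ l) (ν : ZMod l → ℤ × ℤ)
    (k : ℕ) (hk : k ≤ l - 1)
    (ν' : ZMod (l + 1) → ℤ × ℤ)
    (h₁ : ∀ j : ℕ, j ≤ k → ν' (j : ZMod (l + 1)) = ν (j : ZMod l))
    (h₂ : ν' ((k + 1 : ℕ) : ZMod (l + 1)) = ν (k : ZMod l) + ν ((k + 1 : ℕ) : ZMod l))
    (h₃ : ∀ j : ℕ, k + 2 ≤ j → j ≤ l → ν' (j : ZMod (l + 1)) = ν ((j - 1 : ℕ) : ZMod l)) :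
    ∀ u : ℤ × ℤ, cCount ν u ≤ cCount ν' u := by
  intro u
  have hkl : k < l := by omega
  have : NeZero l := ⟨by omega⟩
  have hblowup : IsBlowupAt k ν ν' := ⟨h₁, h₂, h₃⟩
  refine cCount_le_of_insert_sums u (blowupIndex k) blowupIndex_injective
    hblowup.apply_blowupIndex fun i => ?_
  by_cases hi : i = k
  · subst hi
    exact Or.inr ⟨blowupIndex_natCast_add_one hkl, hblowup.apply_blowupIndex_add_one hkl⟩
  · exact Or.inl (blowupIndex_add_one hkl hi)

/-- If Ỹ is an equivariant blow-up of the smooth complete toric surface Y, then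
T¹_Y ⊆ T¹_Ỹ as M-graded vector spaces: c_ν(u) ≤ c_{ν'}(u) for every degree u. -/
theorem t1_le_of_blowup (l : ℕ) (hl : 3 ≤ l) (ν : ZMod l → ℤ × ℤ)
    (hfan : IsSmoothCompleteFan ν) (k : ℕ) (hk : k ≤ l - 1)
    (ν' : ZMod (l + 1) → ℤ × ℤ)
    (h₁ : ∀ j : ℕ, j ≤ k → ν' (j : ZMod (l + 1)) = ν (j : ZMod l))
    (h₂ : ν' ((k + 1 : ℕ) : ZMod (l + 1)) = ν (k : ZMod l) + ν ((k + 1 : ℕ) : ZMod l))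
    (h₃ : ∀ j : ℕ, k + 2 ≤ j → j ≤ l → ν' (j : ZMod (l + 1)) = ν ((j - 1 : ℕ) : ZMod l)) :
    ∀ u : ℤ × ℤ, cCount ν u ≤ cCount ν' u :=
  t1_le_of_blowup_general l hl ν k hk ν' h₁ h₂ h₃
end

section
/- Let l ≥ 3 and ν : ZMod l → ℤ × ℤ encode a smooth complete fan in ℤ². Then for every nonzero u ∈ ℤ × ℤ, the set S_u = {i ∈ ZMod l : ⟨ν i, u⟩ < 0} is nonempty, is not all of ZMod l, and the cyclic adjacency graph on S_u is connected (i.e., S_u is a nonempty proper cyclic arc of indices). This is the two-dimensional case of the claim, established in the proof of the paper's Lemma, that the graph Γ̃_i(u) on all rays pairing negatively with u is connected, because the open half-space {v : ⟨v, u⟩ < 0} is convex. -/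
/-- The cycle graph on ZMod l: distinct j, k are adjacent iff k = j + 1 or j = k + 1. -/
def cycleGraph (l : ℕ) : SimpleGraph (ZMod l) where
  Adj j k := j ≠ k ∧ (k = j + 1 ∨ j = k + 1)
  symm := by
    constructor
    intro a b h
    exact ⟨h.1.symm, h.2.symm⟩
  loopless := by
    constructor
    intro a h
    exact h.1 rfl

/-! The set `S = {i | ⟨ν i, u⟩ < 0}` meets every cone containing `-u` and misses every cone
containing `u`, so it is nonempty and proper. An index `i` with `i ∉ S` and `i + 1 ∈ S` says that
`w = (-u.2, u.1)`, the normal `u` turned by a quarter, lies in the half-open cone `[ν i, ν (i+1))`;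
pushing `w` slightly towards `ν (i+1)` lands in the open cone, so by disjointness of the open
cones there is only one such `i`. A nonempty proper subset of `ZMod n` entered only once is an
arc, hence connected in the cycle graph. -/

theorem det2_smul_eq (a b y : ℤ × ℤ) : det2 a b • y = det2 y b • a + det2 a y • b := by
  ext <;> simp only [det2, Prod.smul_fst, Prod.smul_snd, Prod.fst_add, Prod.snd_add,
    smul_eq_mul] <;> ring

theorem det2_mul_det2 (a b c d : ℤ × ℤ) :
    det2 a b * det2 c d = det2 a c * det2 b d + det2 c b * det2 a d := by
  simp only [det2]; ring

theorem toQ_mem_openCone {a b y : ℤ × ℤ} (hab : det2 a b = 1) (ha : 0 < det2 a y)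
    (hb : 0 < det2 y b) : toQ y ∈ openCone a b := by
  refine ⟨det2 y b, det2 a y, by exact_mod_cast hb, by exact_mod_cast ha, ?_⟩
  have h := det2_smul_eq a b y
  rw [hab, one_smul] at h
  have h1 := congrArg (fun p : ℤ × ℤ => (p.1 : ℚ)) h
  have h2 := congrArg (fun p : ℤ × ℤ => (p.2 : ℚ)) h
  simp only [Prod.smul_fst, Prod.smul_snd, Prod.fst_add, Prod.snd_add, smul_eq_mul,
    Int.cast_add, Int.cast_mul] at h1 h2
  ext <;> simp only [toQ, Prod.smul_fst, Prod.smul_snd, Prod.fst_add, Prod.snd_add,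
    smul_eq_mul] <;> assumption

theorem exists_det2_pos_of_det2_nonneg {a b c d w : ℤ × ℤ} (hab : 0 < det2 a b)
    (hcd : 0 < det2 c d) (haw : 0 ≤ det2 a w) (hwb : 0 < det2 w b) (hcw : 0 ≤ det2 c w)
    (hwd : 0 < det2 w d) :
    ∃ y, 0 < det2 a y ∧ 0 < det2 y b ∧ 0 < det2 c y ∧ 0 < det2 y d := by
  have hcb : det2 c w = 0 → 0 < det2 c b := fun hcw0 => by
    have := det2_mul_det2 c b w d
    rw [hcw0] at this
    nlinarith
  have hlin : ∀ (p q : ℤ × ℤ) (N : ℤ), det2 p (N • w + q) = N * det2 p w + det2 p q ∧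
      det2 (N • w + q) p = N * det2 w p + det2 q p := fun p q N => by
    constructor <;> simp only [det2, Prod.smul_fst, Prod.smul_snd, Prod.fst_add, Prod.snd_add,
      smul_eq_mul] <;> ring
  have hbb : det2 b b = 0 := by simp only [det2]; ring
  -- `det2 w d ≥ 1`, and `det2 c w` is either `≥ 1` or `0`, in which case `hcb` applies
  set N := |det2 c b| + |det2 b d| + 1
  have hN0 : 0 < N := by positivity
  refine ⟨N • w + b, ?_, ?_, ?_, ?_⟩
  · rw [(hlin a b N).1]; exact add_pos_of_nonneg_of_pos (mul_nonneg hN0.le haw) hab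
  · rw [(hlin b b N).2, hbb, add_zero]; exact mul_pos hN0 hwb
  · rw [(hlin c b N).1]
    rcases hcw.eq_or_lt with hcw0 | hcw1
    · rw [← hcw0, mul_zero, zero_add]; exact hcb hcw0.symm
    · nlinarith [neg_abs_le (det2 c b), abs_nonneg (det2 b d)]
  · rw [(hlin d b N).2]
    nlinarith [neg_abs_le (det2 b d), abs_nonneg (det2 c b)]

def perp (u : ℤ × ℤ) : ℤ × ℤ := (-u.2, u.1)

theorem det2_perp_right (v u : ℤ × ℤ) : det2 v (perp u) = pairing v u := by
  simp only [det2, perp, pairing]; ring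

theorem det2_perp_left (v u : ℤ × ℤ) : det2 (perp u) v = -pairing v u := by
  simp only [det2, perp, pairing]; ring

theorem pairing_comm (v u : ℤ × ℤ) : pairing v u = pairing u v := by
  simp only [pairing]; ring

theorem pairing_neg_right (v u : ℤ × ℤ) : pairing v (-u) = -pairing v u := by
  simp only [pairing, Prod.fst_neg, Prod.snd_neg]; ring

theorem pairing_self_pos {u : ℤ × ℤ} (hu : u ≠ 0) : 0 < pairing u u := by
  obtain ⟨a, b⟩ := u
  have hab : a ≠ 0 ∨ b ≠ 0 := by
    by_contra! h
    exact hu (Prod.ext h.1 h.2)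
  simp only [pairing]
  rcases hab with ha | hb
  · exact add_pos_of_pos_of_nonneg (mul_self_pos.mpr ha) (mul_self_nonneg b)
  · exact add_pos_of_nonneg_of_pos (mul_self_nonneg a) (mul_self_pos.mpr hb)

namespace IsSmoothCompleteFan

variable {l : ℕ} {ν : ZMod l → ℤ × ℤ}

theorem exists_pairing_neg (hfan : IsSmoothCompleteFan ν) {x u : ℤ × ℤ}
    (hxu : pairing x u < 0) : ∃ i, pairing (ν i) u < 0 := by
  obtain ⟨i, s, t, hs, ht, hx⟩ := hfan.covers (toQ x)
  have h1 := congrArg Prod.fst hx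
  have h2 := congrArg Prod.snd hx
  simp only [toQ, Prod.fst_add, Prod.snd_add, Prod.smul_fst, Prod.smul_snd, smul_eq_mul]
    at h1 h2
  have hpair : (pairing x u : ℚ) = s * pairing (ν i) u + t * pairing (ν (i + 1)) u := by
    simp only [pairing]; push_cast
    linear_combination (u.1 : ℚ) * h1 + (u.2 : ℚ) * h2
  by_contra! hnonneg
  have hxu' : (pairing x u : ℚ) < 0 := by exact_mod_cast hxu
  have hi : (0 : ℚ) ≤ pairing (ν i) u := by exact_mod_cast hnonneg i
  have hi1 : (0 : ℚ) ≤ pairing (ν (i + 1)) u := by exact_mod_cast hnonneg (i + 1)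
  nlinarith [mul_nonneg hs hi, mul_nonneg ht hi1]

/-- Every lattice point lies in at most one half-open cone `[ν i, ν (i + 1))`. -/
theorem eq_of_det2_nonneg_of_det2_pos (hfan : IsSmoothCompleteFan ν) {i j : ZMod l}
    {w : ℤ × ℤ} (hi : 0 ≤ det2 (ν i) w) (hi1 : 0 < det2 w (ν (i + 1)))
    (hj : 0 ≤ det2 (ν j) w) (hj1 : 0 < det2 w (ν (j + 1))) : i = j := by
  by_contra hij
  have hpos : ∀ k, 0 < det2 (ν k) (ν (k + 1)) := fun k => by rw [hfan.det_one k]; exact one_pos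
  obtain ⟨y, hay, hyb, hcy, hyd⟩ :=
    exists_det2_pos_of_det2_nonneg (hpos i) (hpos j) hi hi1 hj hj1
  exact Set.disjoint_left.mp (hfan.disjointOpen i j hij)
    (toQ_mem_openCone (hfan.det_one i) hay hyb) (toQ_mem_openCone (hfan.det_one j) hcy hyd)

end IsSmoothCompleteFan

section Arc

variable {n : ℕ} [NeZero n] {S : Set (ZMod n)}

theorem exists_notMem_add_one_mem (hne : S.Nonempty) (hS : S ≠ Set.univ) :
    ∃ i, i ∉ S ∧ i + 1 ∈ S := by
  obtain ⟨a, ha⟩ := hne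
  obtain ⟨z, hz⟩ := (Set.ne_univ_iff_exists_notMem S).mp hS
  by_contra! hstep
  have hout : ∀ k : ℕ, z + k ∉ S := by
    intro k
    induction k with
    | zero => simpa using hz
    | succ k ih => simpa [add_assoc] using hstep _ ih
  exact hout (a - z).val (by simpa [ZMod.natCast_zmod_val] using ha)

theorem cycleGraph_induce_connected {e : ZMod n} (he : e + 1 ∈ S)
    (hentry : ∀ i, i ∉ S → i + 1 ∈ S → i = e) : ((cycleGraph n).induce S).Connected := by
  have hreach : ∀ k : ℕ, k < n → ∀ x : S, (x : ZMod n) = e + 1 + k →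
      ((cycleGraph n).induce S).Reachable ⟨e + 1, he⟩ x := by
    intro k
    induction k with
    | zero =>
      intro _ x hx
      obtain rfl : x = ⟨e + 1, he⟩ := Subtype.ext (by simpa using hx)
      rfl
    | succ k ih =>
      intro hkn x hx
      have hsucc : e + 1 + ((k + 1 : ℕ) : ZMod n) = e + 1 + k + 1 := by push_cast; ring
      have hk : e + 1 + k ∈ S := by
        by_contra hk
        have h0 : ((k + 1 : ℕ) : ZMod n) = 0 := by
          have := hentry _ hk (hsucc ▸ hx ▸ x.2)
          push_cast; linear_combination this
        have := Nat.le_of_dvd k.succ_pos ((ZMod.natCast_eq_zero_iff _ _).mp h0)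
        omega
      have hne : e + 1 + (k : ZMod n) ≠ e + 1 + ((k + 1 : ℕ) : ZMod n) := by
        intro h
        have := (ZMod.natCast_eq_natCast_iff' _ _ _).mp (add_left_cancel h)
        rw [Nat.mod_eq_of_lt (by omega), Nat.mod_eq_of_lt hkn] at this
        omega
      have hadj : ((cycleGraph n).induce S).Adj ⟨e + 1 + k, hk⟩ x := by
        show (cycleGraph n).Adj (e + 1 + k) x
        rw [hx]
        exact ⟨hne, Or.inl hsucc⟩
      exact (ih (by omega) _ rfl).trans hadj.reachable
  rw [SimpleGraph.connected_iff_exists_forall_reachable]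
  exact ⟨⟨e + 1, he⟩, fun x =>
    hreach ((x : ZMod n) - (e + 1)).val (ZMod.val_lt _) x (by simp)⟩

end Arc

/-- For any nonzero degree u, the set of rays pairing negatively with u is a nonempty
proper cyclic arc: it is nonempty, proper, and its cyclic adjacency graph is connected. -/
theorem negativeRays_connected (l : ℕ) (hl : 3 ≤ l) (ν : ZMod l → ℤ × ℤ)
    (hfan : IsSmoothCompleteFan ν) (u : ℤ × ℤ) (hu : u ≠ 0) :
    {i : ZMod l | pairing (ν i) u < 0}.Nonempty ∧
    {i : ZMod l | pairing (ν i) u < 0} ≠ Set.univ ∧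
    ((cycleGraph l).induce {i : ZMod l | pairing (ν i) u < 0}).Connected := by
  have : NeZero l := ⟨by omega⟩
  have hne : {i : ZMod l | pairing (ν i) u < 0}.Nonempty :=
    hfan.exists_pairing_neg (x := -u) (by
      rw [pairing_comm, pairing_neg_right, neg_neg_iff_pos]; exact pairing_self_pos hu)
  have hproper : {i : ZMod l | pairing (ν i) u < 0} ≠ Set.univ := by
    obtain ⟨i, hi⟩ := hfan.exists_pairing_neg (x := u) (u := -u) (by
      rw [pairing_neg_right, neg_neg_iff_pos]; exact pairing_self_pos hu)
    rw [pairing_neg_right, neg_neg_iff_pos] at hi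
    exact (Set.ne_univ_iff_exists_notMem _).mpr ⟨i, fun h => h.not_gt hi⟩
  obtain ⟨e, he, he1⟩ := exists_notMem_add_one_mem hne hproper
  refine ⟨hne, hproper, cycleGraph_induce_connected he1 fun i hi hi1 => ?_⟩
  simp only [Set.mem_ofPred_eq, not_lt] at he he1 hi hi1
  exact hfan.eq_of_det2_nonneg_of_det2_pos (w := perp u)
    (by rwa [det2_perp_right]) (by rwa [det2_perp_left, neg_pos])
    (by rwa [det2_perp_right]) (by rwa [det2_perp_left, neg_pos])
end

section
/- Let l ≥ 3 and ν : ZMod l → ℤ × ℤ encode a smooth complete fan in ℤ², let u ∈ ℤ × ℤ, and let i₀ ∈ ZMod l satisfy ⟨ν i₀, u⟩ = −1. Set S_u = {i ∈ ZMod l : ⟨ν i, u⟩ < 0}. Then the number of connected components of the cyclic adjacency graph on S_u \ {i₀} equals the number of elements of {i₀ − 1, i₀ + 1} lying in S_u. This is the n = 2 case of the paper's Lemma: the graph Γ_{i₀}(u) has the same number of connected components as its subgraph Γ_{i₀}°(u) induced on the rays sharing a cone with ρ_{i₀}. -/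
/-!
The rays in the open half-plane `⟨·, u⟩ < 0` form a cyclic interval of `ZMod l`: at every
index where the sign of `⟨ν i, u⟩` switches from `≥ 0` to `< 0`, the open cone `σ_{i-1}` contains
the points `J u - δ u` for all small `δ > 0`, where `J u = (-u.2, u.1)` spans the boundary line
`⟨·, u⟩ = 0`; since open cones are disjoint, there is at most one such switch. Removing `i₀` from
a proper cyclic interval leaves one run for each neighbour of `i₀` inside the interval, and the
components of an induced subgraph of the cycle are exactly its maximal runs.
-/

open Filter Topology

section CycleGraph

variable {l : ℕ}

def runStarts (T : Set (ZMod l)) : Set (ZMod l) := {i | i ∈ T ∧ i - 1 ∉ T}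

lemma runStarts_diff_singleton [Fact (1 < l)] (T : Set (ZMod l)) (x : ZMod l) :
    runStarts (T \ {x}) = runStarts T \ {x} ∪ ({x + 1} ∩ T) := by
  have hx : x + 1 ≠ x := by simp
  ext i
  simp only [runStarts, Set.mem_ofPred_eq, Set.mem_sdiff, Set.mem_union, Set.mem_inter_iff,
    Set.mem_singleton_iff, not_and, not_not, sub_eq_iff_eq_add]
  grind

lemma exists_runStart_reachable [Fact (1 < l)] {T : Set (ZMod l)} (hT : T ≠ Set.univ)
    {v : ZMod l} (hv : v ∈ T) :
    ∃ s, ∃ hs : s ∈ runStarts T, ((cycleGraph l).induce T).Reachable ⟨s, hs.1⟩ ⟨v, hv⟩ := by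
  obtain ⟨q, hq⟩ := (Set.ne_univ_iff_exists_notMem T).1 hT
  suffices h : ∀ n : ℕ, ∀ v (hv : v ∈ T), v - n ∉ T →
      ∃ s, ∃ hs : s ∈ runStarts T, ((cycleGraph l).induce T).Reachable ⟨s, hs.1⟩ ⟨v, hv⟩ from
    h (v - q).val v hv (by simpa using hq)
  intro n
  induction n with
  | zero => intro v hv hn; simp_all
  | succ n ih =>
    intro v hv hn
    by_cases hprev : v - 1 ∈ T
    · obtain ⟨s, hs, hreach⟩ := ih (v - 1) hprev (by push_cast at hn; rwa [sub_sub, add_comm])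
      have hadj : (cycleGraph l).Adj (v - 1) v := ⟨by simp, Or.inl (sub_add_cancel v 1).symm⟩
      exact ⟨s, hs, hreach.trans (SimpleGraph.induce_adj.2 hadj).reachable⟩
    · exact ⟨v, ⟨hv, hprev⟩, .refl _⟩

lemma eq_of_reachable_of_mem_runStarts {T : Set (ZMod l)} {s s' : ZMod l}
    (hs : s ∈ runStarts T) (hs' : s' ∈ runStarts T)
    (h : ((cycleGraph l).induce T).Reachable ⟨s, hs.1⟩ ⟨s', hs'.1⟩) : s = s' := by
  -- The run of `T` starting at `s`; it cannot be left backwards because `s - 1 ∉ T`.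
  let run : Set (ZMod l) := {v | ∃ n : ℕ, v = s + n ∧ ∀ k ≤ n, s + k ∈ T}
  have run_closed : ∀ a b : T, ((cycleGraph l).induce T).Adj a b → a.1 ∈ run → b.1 ∈ run := by
    intro a b hadj ⟨n, ha, hn⟩
    obtain ⟨-, hab | hba⟩ := SimpleGraph.induce_adj.1 hadj
    · refine ⟨n + 1, by rw [hab, ha]; push_cast; ring, fun k hk => ?_⟩
      rcases Nat.lt_or_eq_of_le hk with hk | rfl
      · exact hn k (by omega)
      · convert b.2 using 1; rw [hab, ha]; push_cast; ring
    · obtain _ | m := n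
      · have hb : (b : ZMod l) = s - 1 := by rw [eq_sub_iff_add_eq, ← hba, ha]; simp
        exact absurd (hb ▸ b.2) hs.2
      · exact ⟨m, by rw [eq_sub_of_add_eq hba.symm, ha]; push_cast; ring,
          fun k hk => hn k (by omega)⟩
  have walk_run : ∀ (a b : T), ((cycleGraph l).induce T).Walk a b → a.1 ∈ run → b.1 ∈ run := by
    intro a b p
    induction p with
    | nil => exact id
    | cons hadj _ ih => exact fun ha => ih (run_closed _ _ hadj ha)
  have hs_run : s ∈ run := ⟨0, by simp, fun k hk => by simpa [Nat.le_zero.1 hk] using hs.1⟩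
  obtain ⟨n, rfl, hn⟩ := walk_run _ _ h.some hs_run
  obtain _ | m := n
  · simp
  · exact (hs'.2 (by convert hn m (by omega) using 1; push_cast; ring)).elim

theorem card_connectedComponent_induce_cycleGraph [Fact (1 < l)] {T : Set (ZMod l)}
    (hT : T ≠ Set.univ) :
    Nat.card ((cycleGraph l).induce T).ConnectedComponent = (runStarts T).ncard := by
  let f : runStarts T → ((cycleGraph l).induce T).ConnectedComponent :=
    fun s => ((cycleGraph l).induce T).connectedComponentMk ⟨s, s.2.1⟩
  have hf : Function.Bijective f := by
    refine ⟨fun s s' h => Subtype.ext (eq_of_reachable_of_mem_runStarts s.2 s'.2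
      (SimpleGraph.ConnectedComponent.exact h)), fun c => ?_⟩
    induction c using SimpleGraph.ConnectedComponent.ind with
    | h v =>
      obtain ⟨s, hs, hreach⟩ := exists_runStart_reachable hT v.2
      exact ⟨⟨s, hs⟩, SimpleGraph.ConnectedComponent.sound hreach⟩
  rw [← Nat.card_coe_set_eq, Nat.card_eq_of_bijective f hf]

lemma ncard_runStarts_diff_singleton (hl : 3 ≤ l) {S : Set (ZMod l)} (hS : S ≠ Set.univ)
    (hrun : (runStarts S).Subsingleton) {x : ZMod l} (hx : x ∈ S) :
    (runStarts (S \ {x})).ncard = ({x - 1, x + 1} ∩ S).ncard := by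
  have : Fact (1 < l) := ⟨by omega⟩
  rw [runStarts_diff_singleton]
  by_cases hprev : x - 1 ∈ S
  · obtain ⟨s, hs, -⟩ := exists_runStart_reachable hS hx
    have hsx : s ≠ x := fun h => hs.2 (h ▸ hprev)
    have hs_next : s ∉ {x + 1} ∩ S := fun h =>
      hs.2 (by rwa [Set.mem_singleton_iff.1 h.1, add_sub_cancel_right])
    have hprev_next : x - 1 ∉ {x + 1} ∩ S := by
      rintro ⟨h, -⟩
      have h2 : ((2 : ℕ) : ZMod l) = 0 := by
        push_cast; linear_combination -(Set.mem_singleton_iff.1 h)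
      have := Nat.le_of_dvd two_pos ((ZMod.natCast_eq_zero_iff 2 l).1 h2)
      omega
    calc (runStarts S \ {x} ∪ ({x + 1} ∩ S)).ncard
        = (insert s ({x + 1} ∩ S)).ncard := by
          rw [hrun.eq_singleton_of_mem hs,
            Set.sdiff_singleton_eq_self (Set.mem_singleton_iff.not.2 hsx.symm), Set.singleton_union]
      _ = ({x + 1} ∩ S).ncard + 1 := Set.ncard_insert_of_notMem hs_next
      _ = (insert (x - 1) ({x + 1} ∩ S)).ncard := (Set.ncard_insert_of_notMem hprev_next).symm
      _ = ({x - 1, x + 1} ∩ S).ncard := by rw [Set.insert_inter_of_mem hprev]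
  · rw [hrun.eq_singleton_of_mem ⟨hx, hprev⟩, Set.sdiff_self, Set.empty_union,
      Set.insert_inter_of_notMem hprev]

end CycleGraph

section Fan

variable {l : ℕ} {ν : ZMod l → ℤ × ℤ}

lemma eventually_pos_sub_mul {a d : ℚ} (ha : 0 ≤ a) (h : 0 < a ∨ d < 0) :
    ∀ᶠ δ in 𝓝[>] (0 : ℚ), 0 < a - δ * d := by
  rcases h with hpos | hd
  · have hcont : Tendsto (fun δ : ℚ => a - δ * d) (𝓝 0) (𝓝 a) :=
      Continuous.tendsto' (by fun_prop) 0 a (by simp)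
    exact nhdsWithin_le_nhds (hcont.eventually (lt_mem_nhds hpos))
  · filter_upwards [self_mem_nhdsWithin] with δ (hδ : 0 < δ)
    nlinarith

/-- Since `det2 A B = 1`, we have `J u = -⟨B, u⟩ A + ⟨A, u⟩ B` and `u = c A + d B` with
`c = det2 u B`, `d = det2 A u`, so `J u - δ u` has coordinates `(-⟨B, u⟩ - δ c, ⟨A, u⟩ - δ d)`;
when `⟨A, u⟩ = 0` the second one is saved by `d = ⟨B, u⟩ ‖A‖² < 0`. -/
lemma eventually_mem_openCone_of_sign_change {A B u : ℤ × ℤ} (h : det2 A B = 1)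
    (hA : 0 ≤ pairing A u) (hB : pairing B u < 0) :
    ∀ᶠ δ in 𝓝[>] (0 : ℚ), toQ (-u.2, u.1) - δ • toQ u ∈ openCone A B := by
  have hd : pairing A u = 0 → det2 A u < 0 := by
    intro hA0
    have hA_sq : 0 < A.1 ^ 2 + A.2 ^ 2 := by
      have : A.1 ≠ 0 ∨ A.2 ≠ 0 := by
        contrapose! h
        simp [det2, h.1, h.2]
      rcases this with h | h <;> positivity
    have hdet : det2 A u = pairing B u * (A.1 ^ 2 + A.2 ^ 2) := by
      simp only [pairing, det2] at *
      linear_combination (A.2 * u.1 - A.1 * u.2) * h - (A.1 * B.1 + A.2 * B.2) * hA0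
    rw [hdet]
    exact mul_neg_of_neg_of_pos hB hA_sq
  have hBQ : (pairing B u : ℚ) < 0 := by exact_mod_cast hB
  have hs := eventually_pos_sub_mul (a := -(pairing B u : ℚ)) (d := det2 u B)
    (neg_pos.2 hBQ).le (Or.inl (neg_pos.2 hBQ))
  have ht := eventually_pos_sub_mul (a := (pairing A u : ℚ)) (d := det2 A u)
    (by exact_mod_cast hA) (by
      rcases hA.lt_or_eq with hA | hA
      · exact Or.inl (by exact_mod_cast hA)
      · exact Or.inr (by exact_mod_cast hd hA.symm))
  filter_upwards [hs, ht] with δ hs ht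
  refine ⟨_, _, hs, ht, ?_⟩
  have hQ : (A.1 : ℚ) * B.2 - A.2 * B.1 = 1 := by exact_mod_cast h
  simp only [toQ, pairing, det2, Prod.ext_iff, Prod.fst_sub, Prod.snd_sub, Prod.fst_add,
    Prod.snd_add, Prod.smul_fst, Prod.smul_snd, smul_eq_mul]
  push_cast
  constructor
  · linear_combination ((u.2 : ℚ) + δ * u.1) * hQ
  · linear_combination (δ * u.2 - (u.1 : ℚ)) * hQ

lemma runStarts_setOf_pairing_neg_subsingleton (hfan : IsSmoothCompleteFan ν) (u : ℤ × ℤ) :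
    (runStarts {i | pairing (ν i) u < 0}).Subsingleton := by
  have cone_near : ∀ i ∈ runStarts {i | pairing (ν i) u < 0},
      ∀ᶠ δ in 𝓝[>] (0 : ℚ),
        toQ (-u.2, u.1) - δ • toQ u ∈ openCone (ν (i - 1)) (ν (i - 1 + 1)) :=
    fun i hi => eventually_mem_openCone_of_sign_change (hfan.det_one (i - 1)) (not_lt.1 hi.2)
      (by rw [sub_add_cancel]; exact hi.1)
  intro x hx y hy
  by_contra hxy
  obtain ⟨δ, hδx, hδy⟩ := ((cone_near x hx).and (cone_near y hy)).exists
  exact Set.disjoint_left.1 (hfan.disjointOpen (x - 1) (y - 1) (by simpa using hxy)) hδx hδy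

lemma setOf_pairing_neg_ne_univ (hfan : IsSmoothCompleteFan ν) {u : ℤ × ℤ} (hu : u ≠ 0) :
    {i | pairing (ν i) u < 0} ≠ Set.univ := by
  intro hall
  have hneg : ∀ i, pairing (ν i) u < 0 := Set.eq_univ_iff_forall.1 hall
  obtain ⟨j, s, t, hs, ht, hx⟩ := hfan.covers (toQ u)
  have hj : ((pairing (ν j) u : ℤ) : ℚ) < 0 := by exact_mod_cast hneg j
  have hj' : ((pairing (ν (j + 1)) u : ℤ) : ℚ) < 0 := by exact_mod_cast hneg (j + 1)
  simp only [toQ, Prod.ext_iff, Prod.fst_add, Prod.snd_add, Prod.smul_fst, Prod.smul_snd,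
    smul_eq_mul] at hx
  have hnorm : (u.1 : ℚ) ^ 2 + (u.2 : ℚ) ^ 2
      = s * ((pairing (ν j) u : ℤ) : ℚ) + t * ((pairing (ν (j + 1)) u : ℤ) : ℚ) := by
    simp only [pairing]; push_cast
    linear_combination (u.1 : ℚ) * hx.1 + (u.2 : ℚ) * hx.2
  have hpos : 0 < (u.1 : ℚ) ^ 2 + (u.2 : ℚ) ^ 2 := by
    have hu' : u.1 ≠ 0 ∨ u.2 ≠ 0 := by
      contrapose! hu
      exact Prod.ext hu.1 hu.2
    rcases hu' with h | h
    · have h : (u.1 : ℚ) ≠ 0 := by exact_mod_cast h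
      positivity
    · have h : (u.2 : ℚ) ≠ 0 := by exact_mod_cast h
      positivity
  nlinarith [mul_nonneg hs (neg_nonneg.2 hj.le), mul_nonneg ht (neg_nonneg.2 hj'.le)]

end Fan

/-- The n = 2 case of the paper's Lemma: if ⟨ν i₀, u⟩ = −1, then the number of connected
components of the cyclic adjacency graph on S_u \ {i₀}, where
S_u = {i : ⟨ν i, u⟩ < 0}, equals the number of elements of {i₀ − 1, i₀ + 1} lying in S_u. -/
theorem components_eq_neighbors_count (l : ℕ) (hl : 3 ≤ l) (ν : ZMod l → ℤ × ℤ)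
    (hfan : IsSmoothCompleteFan ν) (u : ℤ × ℤ) (i₀ : ZMod l)
    (hi₀ : pairing (ν i₀) u = -1) :
    Nat.card ((cycleGraph l).induce
        ({i : ZMod l | pairing (ν i) u < 0} \ {i₀})).ConnectedComponent =
      (({i₀ - 1, i₀ + 1} : Set (ZMod l)) ∩ {i : ZMod l | pairing (ν i) u < 0}).ncard := by
  have : Fact (1 < l) := ⟨by omega⟩
  have hi₀S : i₀ ∈ {i : ZMod l | pairing (ν i) u < 0} := by simp [hi₀]
  have hu : u ≠ 0 := by rintro rfl; simp [pairing] at hi₀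
  rw [card_connectedComponent_induce_cycleGraph
      ((Set.ne_univ_iff_exists_notMem _).2 ⟨i₀, fun h => h.2 rfl⟩),
    ncard_runStarts_diff_singleton hl (setOf_pairing_neg_ne_univ hfan hu)
      (runStarts_setOf_pairing_neg_subsingleton hfan u) hi₀S]
end

section
/- Let l ≥ 3 and ν : ZMod l → ℤ × ℤ encode a smooth complete fan in ℤ², let u ∈ ℤ × ℤ, and let i₀ ∈ ZMod l satisfy ⟨ν i₀, u⟩ = −1. Set S_u = {i ∈ ZMod l : ⟨ν i, u⟩ < 0}. Then every connected component of the cyclic adjacency graph on S_u \ {i₀} contains i₀ − 1 or i₀ + 1. This is the two-dimensional case of the claim, proved in the paper's Lemma, that every connected component of Γ_{i₀}(u) has nonempty intersection with Γ_{i₀}°(u). -/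
/-!
If `⟨ν i, u⟩ < 0 ≤ ⟨ν (i+1), u⟩`, then `det (ν i) (ν (i+1)) = 1` gives
`⟨ν (i+1), u⟩ • ν i - ⟨ν i, u⟩ • ν (i+1) = (u.2, -u.1) =: r`, so the cone `σ_i` contains
the ray of `r`, and for large `M` the point `M • r - u` lies in its interior. Hence two
such exits from `S_u` would give overlapping open cones: `S_u` has at most one exit in the
cyclic order, i.e. it is a cyclic arc. Removing `i₀` from an arc through `i₀` leaves at most
two arcs, one ending at `i₀ - 1` and one starting at `i₀ + 1`.
-/

open Filter

lemma Nat.exists_le_lt_and_not_succ {p : ℕ → Prop} {a b : ℕ} (hab : a ≤ b) (ha : p a)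
    (hb : ¬ p b) : ∃ c, a ≤ c ∧ c < b ∧ p c ∧ ¬ p (c + 1) := by
  induction b, hab using Nat.le_induction with
  | base => exact absurd ha hb
  | succ b hab ih =>
    by_cases hpb : p b
    · exact ⟨b, hab, b.lt_succ_self, hpb, hb⟩
    · obtain ⟨c, hac, hcb, hc⟩ := ih hpb
      exact ⟨c, hac, hcb.trans b.lt_succ_self, hc⟩

lemma smul_add_smul_eq_of_det2_eq_one {a b : ℤ × ℤ} (hab : det2 a b = 1) (u : ℤ × ℤ) (M : ℤ) :
    (M * pairing b u - det2 u b) • a + (-M * pairing a u - det2 a u) • b =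
      M • (u.2, -u.1) - u := by
  simp only [det2, pairing] at *
  ext
  · simp; linear_combination (M * u.2 - u.1) * hab
  · simp; linear_combination (-M * u.1 - u.2) * hab

lemma toQ_smul_add_smul_mem_openCone {a b : ℤ × ℤ} {s t : ℤ} (hs : 0 < s) (ht : 0 < t) :
    toQ (s • a + t • b) ∈ openCone a b :=
  ⟨s, t, by exact_mod_cast hs, by exact_mod_cast ht, by ext <;> simp [toQ]⟩

lemma det2_lt_zero_of_pairing_eq_zero {a b u : ℤ × ℤ} (hab : det2 a b = 1)
    (ha : pairing a u < 0) (hb : pairing b u = 0) : det2 u b < 0 := by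
  simp only [det2, pairing] at *
  have hu : 0 < u.1 ^ 2 + u.2 ^ 2 := by
    rcases ne_or_eq u.1 0 with h | h
    · positivity
    · have : u.2 ≠ 0 := by rintro h'; simp [h, h'] at ha
      positivity
  have key : u.1 ^ 2 + u.2 ^ 2 = (a.1 * u.1 + a.2 * u.2) * (u.1 * b.2 - u.2 * b.1) := by
    linear_combination (u.1 ^ 2 + u.2 ^ 2) * hab.symm + (a.1 * u.2 - a.2 * u.1) * hb
  nlinarith

lemma eventually_mem_openCone {a b u : ℤ × ℤ} (hab : det2 a b = 1) (ha : pairing a u < 0)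
    (hb : 0 ≤ pairing b u) : ∀ᶠ M : ℤ in atTop, toQ (M • (u.2, -u.1) - u) ∈ openCone a b := by
  filter_upwards [eventually_gt_atTop (det2 u b), eventually_gt_atTop (det2 a u),
    eventually_ge_atTop 0] with M hMb hMa hM0
  rw [← smul_add_smul_eq_of_det2_eq_one hab]
  refine toQ_smul_add_smul_mem_openCone ?_ (by nlinarith)
  rcases hb.lt_or_eq with hb | hb
  · nlinarith
  · have := det2_lt_zero_of_pairing_eq_zero hab ha hb.symm
    rw [← hb]; linarith

theorem IsSmoothCompleteFan.subsingleton_crossings {l : ℕ} {ν : ZMod l → ℤ × ℤ}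
    (hfan : IsSmoothCompleteFan ν) (u : ℤ × ℤ) :
    {i | pairing (ν i) u < 0 ∧ 0 ≤ pairing (ν (i + 1)) u}.Subsingleton := by
  rintro i ⟨hi, hi'⟩ j ⟨hj, hj'⟩
  by_contra hij
  obtain ⟨M, hMi, hMj⟩ := ((eventually_mem_openCone (hfan.det_one i) hi hi').and
    (eventually_mem_openCone (hfan.det_one j) hj hj')).exists
  exact Set.disjoint_left.mp (hfan.disjointOpen i j hij) hMi hMj

section CycleGraph

variable {l : ℕ}

lemma cycleGraph_adj_add_one [Nontrivial (ZMod l)] (i : ZMod l) : (cycleGraph l).Adj i (i + 1) :=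
  ⟨by simp, Or.inl rfl⟩

lemma cycleGraph_induce_reachable_of_forall_add_mem [Nontrivial (ZMod l)] {T : Set (ZMod l)}
    (x y : T) (n : ℕ) (hT : ∀ k ≤ n, (x : ZMod l) + k ∈ T) (hy : (y : ZMod l) = x + n) :
    ((cycleGraph l).induce T).Reachable x y := by
  induction n generalizing y with
  | zero => exact Subtype.ext (by simpa using hy.symm) ▸ .refl x
  | succ n ih =>
    let z : T := ⟨x + n, hT n n.le_succ⟩
    refine (ih z (fun k hk => hT k (hk.trans n.le_succ)) rfl).trans
      (SimpleGraph.Adj.reachable ?_)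
    show (cycleGraph l).Adj (x + n) y
    rw [hy, Nat.cast_succ, ← add_assoc]
    exact cycleGraph_adj_add_one _

lemma add_natCast_mem_diff_singleton {P : Set (ZMod l)} {i₀ : ZMod l} {c : ℕ} (hc : 0 < c)
    (hcl : c < l) (h : i₀ + c ∈ P) : i₀ + c ∈ P \ {i₀} := by
  refine ⟨h, fun hc' => ?_⟩
  have : ((c : ℕ) : ZMod l) = 0 := by simpa using hc'
  rw [ZMod.natCast_eq_zero_iff] at this
  exact absurd (Nat.le_of_dvd hc this) (not_le.mpr hcl)

lemma forall_add_mem_or_forall_add_mem {P : Set (ZMod l)}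
    (hP : {i | i ∈ P ∧ i + 1 ∉ P}.Subsingleton) {i₀ : ZMod l} (hi₀ : i₀ ∈ P) {d : ℕ}
    (hd : i₀ + d ∈ P) :
    (∀ c ≤ d, i₀ + c ∈ P) ∨ (∀ c, d ≤ c → c < l → i₀ + c ∈ P) := by
  -- otherwise `P` has an exit in `[i₀, i₀ + a)` and another one in `[i₀ + d, i₀ + b)`
  by_contra! ⟨⟨a, had, ha⟩, ⟨b, hdb, hbl, hb⟩⟩
  let p : ℕ → Prop := fun c => i₀ + c ∈ P
  have exit (c : ℕ) (hc : p c ∧ ¬ p (c + 1)) : i₀ + c ∈ {i | i ∈ P ∧ i + 1 ∉ P} := by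
    simpa [p, add_assoc] using hc
  obtain ⟨c₁, -, hc₁a, hc₁⟩ :=
    Nat.exists_le_lt_and_not_succ (p := p) (Nat.zero_le a) (by simpa [p] using hi₀) ha
  obtain ⟨c₂, hdc₂, hc₂b, hc₂⟩ := Nat.exists_le_lt_and_not_succ (p := p) hdb hd hb
  have h := hP (exit c₁ hc₁) (exit c₂ hc₂)
  rw [add_right_inj, ZMod.natCast_eq_natCast_iff', Nat.mod_eq_of_lt (by omega),
    Nat.mod_eq_of_lt (by omega)] at h
  omega

theorem cycleGraph_induce_diff_singleton_reachable_neighbor [NeZero l] [Nontrivial (ZMod l)]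
    {P : Set (ZMod l)}
    (hP : {i | i ∈ P ∧ i + 1 ∉ P}.Subsingleton) {i₀ : ZMod l} (hi₀ : i₀ ∈ P) (x : ↥(P \ {i₀})) :
    ∃ y : ↥(P \ {i₀}), ((cycleGraph l).induce (P \ {i₀})).Reachable y x ∧
      ((y : ZMod l) = i₀ - 1 ∨ (y : ZMod l) = i₀ + 1) := by
  obtain ⟨x, hxP, hxi₀⟩ := x
  set d := (x - i₀).val with hd
  have hx : x = i₀ + d := by rw [hd, ZMod.natCast_zmod_val]; ring
  have hd0 : 0 < d := by
    rw [Nat.pos_iff_ne_zero, hd, Ne, ZMod.val_eq_zero, sub_eq_zero]; exact hxi₀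
  have hdl : d < l := ZMod.val_lt _
  rcases forall_add_mem_or_forall_add_mem hP hi₀ (hx ▸ hxP) with h | h
  · have mem (k : ℕ) (hk : k ≤ d - 1) : i₀ + 1 + k ∈ P \ {i₀} := by
      have := add_natCast_mem_diff_singleton (P := P) (by omega) (by omega) (h (k + 1) (by omega))
      simpa [add_assoc, add_comm (1 : ZMod l)] using this
    refine ⟨⟨i₀ + 1, by simpa using mem 0 (Nat.zero_le _)⟩, ?_, Or.inr rfl⟩
    refine cycleGraph_induce_reachable_of_forall_add_mem _ _ (d - 1) mem ?_
    show x = i₀ + 1 + ((d - 1 : ℕ) : ZMod l)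
    rw [hx, Nat.cast_sub (by omega)]; push_cast; ring
  · have mem (k : ℕ) (hk : k ≤ l - 1 - d) : x + k ∈ P \ {i₀} := by
      have := add_natCast_mem_diff_singleton (P := P) (by omega) (by omega)
        (h (d + k) (by omega) (by omega))
      simpa [hx, add_assoc] using this
    have hy : i₀ - 1 = x + ((l - 1 - d : ℕ) : ZMod l) := by
      rw [hx, Nat.cast_sub (by omega), Nat.cast_sub (by omega), ZMod.natCast_self]; ring
    refine ⟨⟨i₀ - 1, hy ▸ mem _ le_rfl⟩, ?_, Or.inl rfl⟩
    exact (cycleGraph_induce_reachable_of_forall_add_mem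
      (T := P \ {i₀}) ⟨x, hxP, hxi₀⟩ _ _ mem hy).symm

end CycleGraph

/-- The n = 2 case of the claim in the paper's Lemma: every connected component of the
cyclic adjacency graph on S_u \ {i₀} (where S_u = {i : ⟨ν i, u⟩ < 0} and
⟨ν i₀, u⟩ = −1) contains i₀ − 1 or i₀ + 1. -/
theorem components_meet_neighbors (l : ℕ) (hl : 3 ≤ l) (ν : ZMod l → ℤ × ℤ)
    (hfan : IsSmoothCompleteFan ν) (u : ℤ × ℤ) (i₀ : ZMod l)
    (hi₀ : pairing (ν i₀) u = -1) :
    ∀ C : ((cycleGraph l).induce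
        ({i : ZMod l | pairing (ν i) u < 0} \ {i₀})).ConnectedComponent,
      ∃ v : ({i : ZMod l | pairing (ν i) u < 0} \ {i₀} : Set (ZMod l)),
        ((cycleGraph l).induce
          ({i : ZMod l | pairing (ν i) u < 0} \ {i₀})).connectedComponentMk v = C ∧
        ((v : ZMod l) = i₀ - 1 ∨ (v : ZMod l) = i₀ + 1) := by
  have : NeZero l := ⟨by omega⟩
  have : Fact (1 < l) := ⟨by omega⟩
  have hexits :
      {i | i ∈ {j | pairing (ν j) u < 0} ∧ i + 1 ∉ {j | pairing (ν j) u < 0}}.Subsingleton :=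
    (hfan.subsingleton_crossings u).anti fun i hi => ⟨hi.1, not_lt.mp hi.2⟩
  rintro C
  obtain ⟨x, rfl⟩ := C.exists_rep
  obtain ⟨y, hyx, hy⟩ :=
    cycleGraph_induce_diff_singleton_reachable_neighbor hexits (by simp [hi₀]) x
  exact ⟨y, SimpleGraph.ConnectedComponent.sound hyx, hy⟩
end

section
/- Let a, b, c ∈ ℤ × ℤ satisfy det(a, b) = 1 and det(b, c) = 1, and suppose a + c = m • b for some integer m ≥ 2. Then there exists u ∈ ℤ × ℤ with ⟨b, u⟩ = −1, ⟨a, u⟩ < 0 and ⟨c, u⟩ < 0. In toric terms: if three consecutive primitive ray generators ν_{i−1} = a, ν_i = b, ν_{i+1} = c of a smooth fan satisfy the non-Fano condition at ν_i (self-intersection of the corresponding invariant curve at most −2), then there is a degree u in which the condition of the paper's T¹ formula for toric surfaces holds at the ray ν_i, so the surface admits a nontrivial infinitesimal deformation of degree u. -/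
theorem pairing_rotate (v w : ℤ × ℤ) : pairing v (w.2, -w.1) = det2 v w := by
  simp only [pairing, det2]
  ring

theorem det2_self (v : ℤ × ℤ) : det2 v v = 0 := by
  simp only [det2]
  ring

theorem det2_swap (v w : ℤ × ℤ) : det2 w v = -det2 v w := by
  simp only [det2]
  ring

theorem det2_sub_left (u v w : ℤ × ℤ) : det2 (u - v) w = det2 u w - det2 v w := by
  simp only [det2, Prod.fst_sub, Prod.snd_sub]
  ring

theorem det2_sub_right (u v w : ℤ × ℤ) : det2 u (v - w) = det2 u v - det2 u w := by
  simp only [det2, Prod.fst_sub, Prod.snd_sub]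
  ring

theorem det2_smul_left (m : ℤ) (v w : ℤ × ℤ) : det2 (m • v) w = m * det2 v w := by
  simp only [det2, Prod.smul_fst, Prod.smul_snd, smul_eq_mul]
  ring

theorem exists_degree_of_nonFano_general (a b c : ℤ × ℤ) (hab : det2 a b = 1)
    (m : ℤ) (hm : 2 ≤ m) (h : a + c = m • b) :
    ∃ u : ℤ × ℤ, pairing b u = -1 ∧ pairing a u < 0 ∧ pairing c u < 0 := by
  have hb : det2 b (a - b) = -1 := by
    rw [det2_sub_right, det2_self, det2_swap a b, hab]
    norm_num
  have ha : det2 a (a - b) = -1 := by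
    rw [det2_sub_right, det2_self, hab]
    norm_num
  have hc : det2 c (a - b) = 1 - m := by
    rw [eq_sub_of_add_eq' h, det2_sub_left, det2_smul_left, hb, ha]
    ring
  refine ⟨((a - b).2, -(a - b).1), ?_, ?_, ?_⟩ <;> rw [pairing_rotate]
  · exact hb
  · rw [ha]
    norm_num
  · rw [hc]
    linarith

/-- If three consecutive primitive ray generators a, b, c of a smooth fan satisfy
det(a,b) = det(b,c) = 1 and a + c = m • b with m ≥ 2 (the non-Fano condition at b),
then there is a degree u with ⟨b, u⟩ = −1, ⟨a, u⟩ < 0 and ⟨c, u⟩ < 0, so the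
associated surface admits a nontrivial infinitesimal deformation of degree u. -/
theorem exists_degree_of_nonFano (a b c : ℤ × ℤ) (hab : det2 a b = 1)
    (hbc : det2 b c = 1) (m : ℤ) (hm : 2 ≤ m) (h : a + c = m • b) :
    ∃ u : ℤ × ℤ, pairing b u = -1 ∧ pairing a u < 0 ∧ pairing c u < 0 :=
  exists_degree_of_nonFano_general a b c hab m hm h
end

section
/- Fix an integer r ≥ 1 and let ν : ZMod 4 → ℤ × ℤ be given by ν 0 = (1, 0), ν 1 = (0, 1), ν 2 = (−1, r), ν 3 = (0, −1) (the fan of the Hirzebruch surface 𝓕_r). Then the set {(u, i) ∈ (ℤ × ℤ) × ZMod 4 : ⟨ν i, u⟩ = −1, ⟨ν (i−1), u⟩ < 0, ⟨ν (i+1), u⟩ < 0} is exactly {((−α, −1), 1) : α ∈ ℤ, 0 < α < r}; in particular it is finite of cardinality r − 1. By the paper's T¹ formula this says dim T¹(𝓕_r)(u) = 1 for u = (−α, −1) with 0 < α < r and = 0 for all other u, so dim T¹(𝓕_r) = r − 1. -/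
/-- For the Hirzebruch surface 𝓕_r (r ≥ 1), the set of pairs (u, i) of a degree and a ray
satisfying the condition of the paper's T¹ formula is exactly
{((−α, −1), 1) : 0 < α < r}; in particular it is finite of cardinality r − 1,
so dim T¹(𝓕_r) = r − 1. -/
theorem t1_hirzebruch (r : ℤ) (hr : 1 ≤ r) (ν : ZMod 4 → ℤ × ℤ)
    (h0 : ν 0 = (1, 0)) (h1 : ν 1 = (0, 1)) (h2 : ν 2 = (-1, r)) (h3 : ν 3 = (0, -1)) :
    {p : (ℤ × ℤ) × ZMod 4 | pairing (ν p.2) p.1 = -1 ∧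
        pairing (ν (p.2 - 1)) p.1 < 0 ∧ pairing (ν (p.2 + 1)) p.1 < 0} =
      {p : (ℤ × ℤ) × ZMod 4 | ∃ α : ℤ, 0 < α ∧ α < r ∧ p = ((-α, -1), 1)} ∧
    {p : (ℤ × ℤ) × ZMod 4 | pairing (ν p.2) p.1 = -1 ∧
        pairing (ν (p.2 - 1)) p.1 < 0 ∧ pairing (ν (p.2 + 1)) p.1 < 0}.Finite ∧
    ({p : (ℤ × ℤ) × ZMod 4 | pairing (ν p.2) p.1 = -1 ∧
        pairing (ν (p.2 - 1)) p.1 < 0 ∧ pairing (ν (p.2 + 1)) p.1 < 0}.ncard : ℤ)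
      = r - 1 := by
  have hM : ∀ j : ZMod 4, j = 0 ∨ j = 1 ∨ j = 2 ∨ j = 3 := by decide
  have key : {p : (ℤ × ℤ) × ZMod 4 | pairing (ν p.2) p.1 = -1 ∧
        pairing (ν (p.2 - 1)) p.1 < 0 ∧ pairing (ν (p.2 + 1)) p.1 < 0} =
      {p : (ℤ × ℤ) × ZMod 4 | ∃ α : ℤ, 0 < α ∧ α < r ∧ p = ((-α, -1), 1)} := by
    ext ⟨u, i⟩
    simp only [Set.mem_setOf_eq]
    constructor
    · rintro ⟨ha, hb, hc⟩
      rcases hM i with h | h | h | h <;> subst h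
      · rw [show (0:ZMod 4) - 1 = 3 by decide, h3] at hb
        rw [show (0:ZMod 4) + 1 = 1 by decide, h1] at hc
        simp [pairing] at hb hc; omega
      · rw [show (1:ZMod 4) - 1 = 0 by decide, h0] at hb
        rw [show (1:ZMod 4) + 1 = 2 by decide, h2] at hc
        rw [h1] at ha
        simp only [pairing] at ha hb hc
        refine ⟨-u.1, by nlinarith, by nlinarith, ?_⟩
        have h2 : u.2 = -1 := by omega
        simp [Prod.ext_iff, h2]
      · rw [show (2:ZMod 4) - 1 = 1 by decide, h1] at hb
        rw [show (2:ZMod 4) + 1 = 3 by decide, h3] at hc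
        simp [pairing] at hb hc; omega
      · rw [show (3:ZMod 4) - 1 = 2 by decide, h2] at hb
        rw [show (3:ZMod 4) + 1 = 0 by decide, h0] at hc
        rw [h3] at ha
        simp only [pairing] at ha hb hc
        nlinarith
    · rintro ⟨α, hα0, hαr, h⟩
      rw [Prod.mk.injEq] at h
      obtain ⟨hu, hi⟩ := h
      subst hu; subst hi
      rw [show (1:ZMod 4) - 1 = 0 by decide, show (1:ZMod 4) + 1 = 2 by decide,
        h0, h1, h2]
      simp only [pairing]
      constructor; · ring
      constructor <;> nlinarith
  refine ⟨key, ?_, ?_⟩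
  · rw [key]
    have : {p : (ℤ × ℤ) × ZMod 4 | ∃ α : ℤ, 0 < α ∧ α < r ∧ p = ((-α, -1), 1)} =
        (fun α : ℤ => (((-α, -1) : ℤ × ℤ), (1 : ZMod 4))) '' Set.Ioo 0 r := by
      ext p; simp [Set.mem_image, Set.mem_Ioo, eq_comm, and_assoc]
    rw [this]
    exact (Set.finite_Ioo 0 r).image _
  · rw [key]
    have himg : {p : (ℤ × ℤ) × ZMod 4 | ∃ α : ℤ, 0 < α ∧ α < r ∧ p = ((-α, -1), 1)} =
        (fun α : ℤ => (((-α, -1) : ℤ × ℤ), (1 : ZMod 4))) '' Set.Ioo 0 r := by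
      ext p; simp [Set.mem_image, Set.mem_Ioo, eq_comm, and_assoc]
    rw [himg, Set.ncard_image_of_injective _ (by intro a b hab; simpa using hab)]
    rw [show (Set.Ioo (0:ℤ) r) = ↑(Finset.Ioo (0:ℤ) r) from (Finset.coe_Ioo 0 r).symm,
      Set.ncard_coe_finset, Int.card_Ioo]
    omega
end

section
/- Fix m ≥ 0 and rationals q_0 > q_1 > … > q_m, with cells Δ⁰, …, Δ^{m+1} as in the definition of the subdivision Ξ₀ of ℚ. Let a : Fin (m+2) → ℤ take values in {1, −1} and suppose that q_i ∈ ℤ whenever 0 ≤ i ≤ m and a i ≠ a (i+1). Then for every λ₀ ∈ ℤ there exist integers λ₀, λ₁, …, λ_{m+1} (beginning with the given λ₀) with λ_{i+1} = λ_i whenever a i = a (i+1) and λ_i + λ_{i+1} = q_i whenever a i ≠ a (i+1), and an admissible subdivision decomposition (A, B) of Ξ₀ such that for every 0 ≤ i ≤ m+1: if a i = 1 then A_i = Δ^i − λ_i (the translate by −λ_i), and moreover B_i = {λ_i} when 1 ≤ i ≤ m; and if a i = −1 then B_i = Δ^i − λ_i, and moreover A_i = {λ_i} when 1 ≤ i ≤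 m. This is the converse direction of the paper's Remark: an integer λ₀ and a binary (m+2)-tuple a define a subdivision decomposition of Ξ₀, which is admissible exactly when the breakpoint Δ₀^i ∩ Δ₀^{i+1} is a lattice point for every i with a_i ≠ a_{i+1}. -/
open Pointwise

/-- The cells Δ⁰, …, Δ^{m+1} of the polyhedral subdivision Ξ₀ of ℚ with breakpoints
q_0 > q_1 > … > q_m: Δ⁰ = [q_0, ∞), Δ^i = [q_i, q_{i−1}] for 1 ≤ i ≤ m, and
Δ^{m+1} = (−∞, q_m]. -/
def cell (m : ℕ) (q : Fin (m + 1) → ℚ) (i : Fin (m + 2)) : Set ℚ :=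
  if i.val = 0 then Set.Ici (q 0)
  else if h : i.val = m + 1 then Set.Iic (q (Fin.last m))
  else Set.Icc (q ⟨i.val, by have := i.isLt; omega⟩)
    (q ⟨i.val - 1, by have := i.isLt; omega⟩)

/-- A subdivision decomposition (Ξ̃₀, Ξ̃_t) of Ξ₀: families A_i, B_i of nonempty subsets
of ℚ, each a singleton, a closed bounded interval, or a closed half-line, such that
A_i + B_i = Δ^i (Minkowski sum), every element of A_i (resp. B_i) is ≥ every element of
A_{i+1} (resp. B_{i+1}), and both families cover ℚ. -/
structure SubdivDecomp (m : ℕ) (q : Fin (m + 1) → ℚ) where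
  A : Fin (m + 2) → Set ℚ
  B : Fin (m + 2) → Set ℚ
  shapeA : ∀ i, (∃ p r : ℚ, p ≤ r ∧ A i = Set.Icc p r) ∨
    (∃ p : ℚ, A i = Set.Ici p) ∨ (∃ p : ℚ, A i = Set.Iic p)
  shapeB : ∀ i, (∃ p r : ℚ, p ≤ r ∧ B i = Set.Icc p r) ∨
    (∃ p : ℚ, B i = Set.Ici p) ∨ (∃ p : ℚ, B i = Set.Iic p)
  sum_eq : ∀ i, A i + B i = cell m q i
  monoA : ∀ i : Fin (m + 1), ∀ x ∈ A i.succ, ∀ y ∈ A i.castSucc, x ≤ y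
  monoB : ∀ i : Fin (m + 1), ∀ x ∈ B i.succ, ∀ y ∈ B i.castSucc, x ≤ y
  coverA : (⋃ i, A i) = Set.univ
  coverB : (⋃ i, B i) = Set.univ

/-- A subdivision decomposition is admissible if for each 1 ≤ i ≤ m at least one of
A_i, B_i is a lattice point. -/
def SubdivDecomp.Admissible {m : ℕ} {q : Fin (m + 1) → ℚ} (D : SubdivDecomp m q) : Prop :=
  ∀ i : Fin (m + 2), 1 ≤ i.val → i.val ≤ m →
    (∃ n : ℤ, D.A i = {(n : ℚ)}) ∨ (∃ n : ℤ, D.B i = {(n : ℚ)})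

/-!
Antitone breakpoints `e` cut ℚ into the cells `cell m e i`, and Minkowski addition of cells is
addition of breakpoints. Hence two antitone sequences `e + f = q` give a subdivision
decomposition with `A i = cell m e i` and `B i = cell m f i`. We split the breakpoint `q j` as
`(q j - λ i) + λ i` or as `λ i + (q j - λ i)` according to the sign `a i` of an adjacent cell
`i`; the relations imposed on `λ` say exactly that the two cells adjacent to `q j` split it the
same way, and both parts are monotone in `q j`. The `λ i` are defined recursively and stay
integral because `q j` is an integer wherever the recursion passes to `q j - λ j`.
-/

open Set

namespace Set

variable {α : Type*} [AddCommGroup α] [PartialOrder α] [IsOrderedAddMonoid α]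

theorem Ici_add_Ici (a b : α) : Ici a + Ici b = Ici (a + b) :=
  (Ici_add_Ici_subset a b).antisymm fun x (hx : a + b ≤ x) =>
    ⟨a, le_rfl, x - a, le_sub_iff_add_le'.2 hx, add_sub_cancel a x⟩

theorem Iic_add_Iic (a b : α) : Iic a + Iic b = Iic (a + b) :=
  (Iic_add_Iic_subset a b).antisymm fun x (hx : x ≤ a + b) =>
    ⟨a, le_rfl, x - a, sub_le_iff_le_add'.2 hx, add_sub_cancel a x⟩

end Set

section Cell

variable {m : ℕ} {e f : Fin (m + 1) → ℚ}

theorem mem_cell {x : ℚ} {i : Fin (m + 2)} :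
    x ∈ cell m e i ↔ (∀ j : Fin (m + 1), j.castSucc = i → e j ≤ x) ∧
      (∀ j : Fin (m + 1), j.succ = i → x ≤ e j) := by
  have hi := i.isLt
  simp only [cell, Fin.ext_iff, Fin.val_castSucc, Fin.val_succ]
  split_ifs with h0 hm
  · refine ⟨fun hx => ⟨fun j hj => ?_, fun j hj => by omega⟩, fun h => h.1 0 h0.symm⟩
    rwa [show j = 0 from Fin.ext (hj.trans h0)]
  · refine ⟨fun hx => ⟨fun j hj => by omega, fun j hj => ?_⟩, fun h => h.2 _ hm.symm⟩
    rwa [show j = Fin.last m from Fin.ext (by simp only [Fin.val_last]; omega)]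
  · refine ⟨fun hx => ⟨fun j hj => ?_, fun j hj => ?_⟩,
      fun h => ⟨h.1 _ rfl, h.2 _ (by simp only; omega)⟩⟩
    · rw [show j = ⟨i, by omega⟩ from Fin.ext hj]; exact hx.1
    · rw [show j = ⟨i - 1, by omega⟩ from Fin.ext (by simp only; omega)]; exact hx.2

theorem cell_congr {i : Fin (m + 2)} (h₁ : ∀ j : Fin (m + 1), j.castSucc = i → e j = f j)
    (h₂ : ∀ j : Fin (m + 1), j.succ = i → e j = f j) : cell m e i = cell m f i := by
  ext x
  simp +contextual only [mem_cell, h₁, h₂]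

theorem image_sub_const_cell (c : ℚ) (i : Fin (m + 2)) :
    (· - c) '' cell m e i = cell m (fun j => e j - c) i := by
  unfold cell
  split_ifs <;> simp

theorem cell_const {c : ℚ} {i : Fin (m + 2)} (h₁ : 1 ≤ i.val) (h₂ : i.val ≤ m) :
    cell m (fun _ => c) i = {c} := by
  ext x
  simp only [mem_cell, mem_singleton_iff]
  refine ⟨fun h => le_antisymm (h.2 ⟨i - 1, by omega⟩ (Fin.ext (by simp only [Fin.succ_mk]; omega)))
    (h.1 ⟨i, by omega⟩ rfl), fun h => ⟨fun _ _ => h.ge, fun _ _ => h.le⟩⟩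

theorem le_of_mem_cell_succ_of_mem_cell_castSucc {j : Fin (m + 1)} {x y : ℚ}
    (hx : x ∈ cell m e j.succ) (hy : y ∈ cell m e j.castSucc) : x ≤ y :=
  (mem_cell.1 hx).2 j rfl |>.trans <| (mem_cell.1 hy).1 j rfl

theorem iUnion_cell : ⋃ i, cell m e i = univ := by
  refine eq_univ_of_forall fun x => mem_iUnion.2 ?_
  obtain ⟨i, hi, hmin⟩ := wellFounded_lt.has_min {i | ∀ j : Fin (m + 1), j.castSucc = i → e j ≤ x}
    ⟨Fin.last _, fun j hj => absurd hj (Fin.castSucc_ne_last j)⟩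
  refine ⟨i, mem_cell.2 ⟨hi, fun j hj => ?_⟩⟩
  by_contra hlt
  refine hmin j.castSucc (fun j' hj' => ?_) (hj ▸ Fin.castSucc_lt_succ)
  rw [Fin.castSucc_inj.1 hj']
  exact (not_le.1 hlt).le

theorem cell_shape (he : Antitone e) (i : Fin (m + 2)) :
    (∃ p r : ℚ, p ≤ r ∧ cell m e i = Icc p r) ∨
      (∃ p : ℚ, cell m e i = Ici p) ∨ (∃ p : ℚ, cell m e i = Iic p) := by
  unfold cell
  split_ifs with h0 hm
  · exact .inr (.inl ⟨_, rfl⟩)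
  · exact .inr (.inr ⟨_, rfl⟩)
  · exact .inl ⟨_, _, he (Fin.mk_le_mk.2 (by omega)), rfl⟩

theorem cell_add_cell (he : Antitone e) (hf : Antitone f) (i : Fin (m + 2)) :
    cell m e i + cell m f i = cell m (e + f) i := by
  unfold cell
  split_ifs with h0 hm
  · exact Ici_add_Ici _ _
  · exact Iic_add_Iic _ _
  · exact Icc_add_Icc (he (Fin.mk_le_mk.2 (by omega))) (hf (Fin.mk_le_mk.2 (by omega)))

def SubdivDecomp.ofBreakpoints {q : Fin (m + 1) → ℚ} (e f : Fin (m + 1) → ℚ) (he : Antitone e)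
    (hf : Antitone f) (hq : e + f = q) : SubdivDecomp m q where
  A := cell m e
  B := cell m f
  shapeA := cell_shape he
  shapeB := cell_shape hf
  sum_eq i := hq ▸ cell_add_cell he hf i
  monoA _ _ hx _ hy := le_of_mem_cell_succ_of_mem_cell_castSucc hx hy
  monoB _ _ hx _ hy := le_of_mem_cell_succ_of_mem_cell_castSucc hx hy
  coverA := iUnion_cell
  coverB := iUnion_cell

end Cell

def splitFst (s : ℤ) (c x : ℚ) : ℚ := if s = 1 then x - c else c

theorem monotone_splitFst (s : ℤ) (c : ℚ) : Monotone (splitFst s c) := by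
  intro x y hxy
  unfold splitFst
  split_ifs <;> linarith

theorem monotone_sub_splitFst (s : ℤ) (c : ℚ) : Monotone fun x => x - splitFst s c x := by
  intro x y hxy
  simp only [splitFst]
  split_ifs <;> linarith

theorem splitFst_eq_splitFst {s t : ℤ} {c d x : ℚ} (hs : s = 1 ∨ s = -1) (ht : t = 1 ∨ t = -1)
    (h₁ : s = t → d = c) (h₂ : s ≠ t → c + d = x) : splitFst s c x = splitFst t d x := by
  rcases hs with rfl | rfl <;> rcases ht with rfl | rfl <;> norm_num [splitFst] at h₁ h₂ ⊢
  · rw [h₁]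
  · linarith
  · linarith
  · rw [h₁]

section SignedDecomposition

variable {m : ℕ} {q : Fin (m + 1) → ℚ} {a : Fin (m + 2) → ℤ} {c : Fin (m + 2) → ℚ}

structure IsSignedTranslation (q : Fin (m + 1) → ℚ) (a : Fin (m + 2) → ℤ)
    (c : Fin (m + 2) → ℚ) : Prop where
  sign : ∀ i, a i = 1 ∨ a i = -1
  succ_eq_of_eq : ∀ j : Fin (m + 1), a j.castSucc = a j.succ → c j.succ = c j.castSucc
  add_eq_of_ne : ∀ j : Fin (m + 1), a j.castSucc ≠ a j.succ → c j.castSucc + c j.succ = q j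

def signedBreakpoints (q : Fin (m + 1) → ℚ) (a : Fin (m + 2) → ℤ) (c : Fin (m + 2) → ℚ)
    (j : Fin (m + 1)) : ℚ :=
  splitFst (a j.castSucc) (c j.castSucc) (q j)

namespace IsSignedTranslation

theorem signedBreakpoints_eq_succ (hc : IsSignedTranslation q a c) (j : Fin (m + 1)) :
    signedBreakpoints q a c j = splitFst (a j.succ) (c j.succ) (q j) :=
  splitFst_eq_splitFst (hc.sign _) (hc.sign _) (hc.succ_eq_of_eq j) (hc.add_eq_of_ne j)

theorem antitone_signedBreakpoints (hc : IsSignedTranslation q a c) (hq : Antitone q) :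
    Antitone (signedBreakpoints q a c) := by
  refine Fin.antitone_iff_succ_le.2 fun j => ?_
  rw [hc.signedBreakpoints_eq_succ j.castSucc, Fin.succ_castSucc]
  exact monotone_splitFst _ _ (hq Fin.castSucc_lt_succ.le)

theorem antitone_sub_signedBreakpoints (hc : IsSignedTranslation q a c) (hq : Antitone q) :
    Antitone (q - signedBreakpoints q a c) := by
  refine Fin.antitone_iff_succ_le.2 fun j => ?_
  simp only [Pi.sub_apply]
  rw [hc.signedBreakpoints_eq_succ j.castSucc, Fin.succ_castSucc]
  exact monotone_sub_splitFst _ _ (hq Fin.castSucc_lt_succ.le)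

theorem cell_signedBreakpoints (hc : IsSignedTranslation q a c) (i : Fin (m + 2)) :
    cell m (signedBreakpoints q a c) i = cell m (fun j => splitFst (a i) (c i) (q j)) i :=
  cell_congr (fun _ hj => hj ▸ rfl) fun j hj => hj ▸ hc.signedBreakpoints_eq_succ j

theorem cell_sub_signedBreakpoints (hc : IsSignedTranslation q a c) (i : Fin (m + 2)) :
    cell m (q - signedBreakpoints q a c) i =
      cell m (fun j => q j - splitFst (a i) (c i) (q j)) i :=
  cell_congr (fun _ hj => hj ▸ rfl)
    fun j hj => hj ▸ congrArg (q j - ·) (hc.signedBreakpoints_eq_succ j)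

def decomp (hc : IsSignedTranslation q a c) (hq : Antitone q) : SubdivDecomp m q :=
  .ofBreakpoints _ _ (hc.antitone_signedBreakpoints hq) (hc.antitone_sub_signedBreakpoints hq)
    (add_sub_cancel _ _)

theorem decomp_A_of_eq_one (hc : IsSignedTranslation q a c) (hq : Antitone q) {i : Fin (m + 2)}
    (hi : a i = 1) : (hc.decomp hq).A i = (· - c i) '' cell m q i := by
  change cell m (signedBreakpoints q a c) i = _
  rw [hc.cell_signedBreakpoints, image_sub_const_cell]
  simp only [splitFst, hi, if_true]

theorem decomp_B_of_eq_neg_one (hc : IsSignedTranslation q a c) (hq : Antitone q)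
    {i : Fin (m + 2)} (hi : a i = -1) : (hc.decomp hq).B i = (· - c i) '' cell m q i := by
  change cell m (q - signedBreakpoints q a c) i = _
  rw [hc.cell_sub_signedBreakpoints, image_sub_const_cell]
  simp [splitFst, hi]

theorem decomp_B_of_eq_one (hc : IsSignedTranslation q a c) (hq : Antitone q) {i : Fin (m + 2)}
    (hi : a i = 1) (h₁ : 1 ≤ i.val) (h₂ : i.val ≤ m) :
    (hc.decomp hq).B i = {c i} := by
  change cell m (q - signedBreakpoints q a c) i = _
  rw [hc.cell_sub_signedBreakpoints]
  simpa [splitFst, hi] using cell_const h₁ h₂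

theorem decomp_A_of_eq_neg_one (hc : IsSignedTranslation q a c) (hq : Antitone q)
    {i : Fin (m + 2)} (hi : a i = -1) (h₁ : 1 ≤ i.val) (h₂ : i.val ≤ m) :
    (hc.decomp hq).A i = {c i} := by
  change cell m (signedBreakpoints q a c) i = _
  rw [hc.cell_signedBreakpoints]
  simpa [splitFst, hi] using cell_const h₁ h₂

end IsSignedTranslation

end SignedDecomposition

theorem exists_int_isSignedTranslation {m : ℕ} {q : Fin (m + 1) → ℚ} {a : Fin (m + 2) → ℤ}
    (ha : ∀ i, a i = 1 ∨ a i = -1)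
    (hint : ∀ j : Fin (m + 1), a j.castSucc ≠ a j.succ → ∃ n : ℤ, q j = n) (lam₀ : ℤ) :
    ∃ lam : Fin (m + 2) → ℤ, lam 0 = lam₀ ∧ IsSignedTranslation q a (fun i => (lam i : ℚ)) := by
  choose n hn using hint
  refine ⟨Fin.induction lam₀ fun j l => if h : a j.castSucc = a j.succ then l else n j h - l,
    rfl, ⟨ha, fun j h => ?_, fun j h => ?_⟩⟩
  · simp [Fin.induction_succ, h]
  · simp [Fin.induction_succ, h, hn]

/-- The converse direction of the paper's Remark: an integer λ₀ and a binary (m+2)-tuple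
a (with a_i ∈ {1, −1}) such that the breakpoint q_i is a lattice point whenever
a_i ≠ a_{i+1} determine an admissible subdivision decomposition of Ξ₀, with translation
data λ satisfying λ_{i+1} = λ_i when a_i = a_{i+1} and λ_i + λ_{i+1} = q_i when
a_i ≠ a_{i+1}, and with A_i = Δ^i − λ_i, B_i = {λ_i} (1 ≤ i ≤ m) when a_i = 1, and
B_i = Δ^i − λ_i, A_i = {λ_i} (1 ≤ i ≤ m) when a_i = −1. -/
theorem exists_admissible_decomposition (m : ℕ) (q : Fin (m + 1) → ℚ)
    (hq : StrictAnti q) (a : Fin (m + 2) → ℤ) (ha : ∀ i, a i = 1 ∨ a i = -1)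
    (hadm : ∀ i : Fin (m + 1), a i.castSucc ≠ a i.succ → ∃ n : ℤ, q i = (n : ℚ)) :
    ∀ lam₀ : ℤ, ∃ (lam : Fin (m + 2) → ℤ) (D : SubdivDecomp m q),
      lam 0 = lam₀ ∧
      (∀ i : Fin (m + 1), a i.castSucc = a i.succ → lam i.succ = lam i.castSucc) ∧
      (∀ i : Fin (m + 1), a i.castSucc ≠ a i.succ →
        ((lam i.castSucc : ℚ) + (lam i.succ : ℚ) = q i)) ∧
      D.Admissible ∧
      (∀ i, a i = 1 → D.A i = (fun x => x - (lam i : ℚ)) '' cell m q i) ∧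
      (∀ i, a i = 1 → 1 ≤ i.val → i.val ≤ m → D.B i = {((lam i : ℤ) : ℚ)}) ∧
      (∀ i, a i = -1 → D.B i = (fun x => x - (lam i : ℚ)) '' cell m q i) ∧
      (∀ i, a i = -1 → 1 ≤ i.val → i.val ≤ m → D.A i = {((lam i : ℤ) : ℚ)}) := by
  intro lam₀
  obtain ⟨lam, hlam₀, hc⟩ := exists_int_isSignedTranslation ha hadm lam₀
  have hq' := hq.antitone
  refine ⟨lam, hc.decomp hq', hlam₀, fun j h => Int.cast_injective (hc.succ_eq_of_eq j h),
    hc.add_eq_of_ne, fun i h₁ h₂ => ?_, fun _ => hc.decomp_A_of_eq_one hq',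
    fun _ => hc.decomp_B_of_eq_one hq', fun _ => hc.decomp_B_of_eq_neg_one hq',
    fun _ => hc.decomp_A_of_eq_neg_one hq'⟩
  rcases ha i with hi | hi
  · exact .inr ⟨lam i, hc.decomp_B_of_eq_one hq' hi h₁ h₂⟩
  · exact .inl ⟨lam i, hc.decomp_A_of_eq_neg_one hq' hi h₁ h₂⟩
end

section
/- Fix m ≥ 0 and rationals q_0 > q_1 > … > q_m, with cells Δ⁰, …, Δ^{m+1} as in the definition of the subdivision Ξ₀ of ℚ, and let (A, B) be a subdivision decomposition of Ξ₀. Then for every 0 ≤ i ≤ m: (1) if B_i = {β} and B_{i+1} = {β'} are both singletons then β = β' (and symmetrically, if A_i and A_{i+1} are both singletons then they are equal); (2) if B_i = {β} is a singleton and A_{i+1} = {α} is a singleton (or A_i = {α} and B_{i+1} = {β}), then α + β = q_i. This is the first part of the paper's Remark: the translation data (λ_i) associated to a subdivision decomposition satisfy λ_i = λ_{i+1} when a_i = a_{i+1}, and λ_i + λ_{i+1} = Δ₀^i ∩ Δ₀^{i+1} when a_i ≠ a_{i+1}. -/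
/-!
The breakpoint `q i` is the least point of `Δ^i` and the greatest point of `Δ^{i+1}`. If a
factor is a singleton `{β}`, its partner is the cell translated by `-β`, so the partner's extreme
point at the breakpoint is `q i - β`. Two such extreme points coming from the same family must
coincide, since otherwise the open interval between them would miss the whole family, which is
ordered from cell to cell and covers `ℚ`. For factors on opposite sides, the ordering of both
families gives the two inequalities `α + β ≤ q i` and `q i ≤ α + β`.
-/

open Pointwise

section AntitoneChain

variable {α : Type*} {n : ℕ} {S : Fin (n + 1) → Set α}

theorem le_of_mem_of_lt_of_adjacent_le [Preorder α] (hne : ∀ i, (S i).Nonempty)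
    (hadj : ∀ i : Fin n, ∀ x ∈ S i.succ, ∀ y ∈ S i.castSucc, x ≤ y)
    {j k : Fin (n + 1)} (hjk : j < k) {x y : α} (hx : x ∈ S k) (hy : y ∈ S j) : x ≤ y := by
  induction k using Fin.induction generalizing x with
  | zero => exact absurd hjk (Fin.not_lt_zero j)
  | succ k ih =>
    rcases (Fin.le_castSucc_iff.2 hjk).lt_or_eq with hlt | rfl
    · obtain ⟨z, hz⟩ := hne k.castSucc
      exact (hadj k x hx z hz).trans (ih hlt hz)
    · exact hadj _ x hx y hy

theorem eq_of_isLeast_castSucc_of_isGreatest_succ [LinearOrder α] [DenselyOrdered α]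
    (hcover : ⋃ i, S i = Set.univ) (hne : ∀ i, (S i).Nonempty)
    (hadj : ∀ i : Fin n, ∀ x ∈ S i.succ, ∀ y ∈ S i.castSucc, x ≤ y)
    {i : Fin n} {a b : α} (ha : IsLeast (S i.castSucc) a) (hb : IsGreatest (S i.succ) b) :
    a = b := by
  refine le_antisymm ?_ (hadj i b hb.1 a ha.1)
  by_contra! hba
  obtain ⟨x, hbx, hxa⟩ := exists_between hba
  obtain ⟨l, hl⟩ := Set.mem_iUnion.1 (hcover ▸ Set.mem_univ x)
  rcases le_or_gt l i.castSucc with hle | hgt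
  · rcases hle.lt_or_eq with hlt | rfl
    · exact hxa.not_ge (le_of_mem_of_lt_of_adjacent_le hne hadj hlt ha.1 hl)
    · exact hxa.not_ge (ha.2 hl)
  · rcases (Fin.castSucc_lt_iff_succ_le.1 hgt).lt_or_eq with hlt | rfl
    · exact hbx.not_ge (le_of_mem_of_lt_of_adjacent_le hne hadj hlt hl hb.1)
    · exact hbx.not_ge (hb.2 hl)

end AntitoneChain

section Translate

variable {α : Type*} [AddCommGroup α] {A C : Set α} {b c : α}

theorem mem_iff_add_mem_of_add_singleton_eq (h : A + {b} = C) (x : α) :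
    x ∈ A ↔ x + b ∈ C := by
  simp [← h, Set.add_singleton]

variable [PartialOrder α] [IsOrderedAddMonoid α]

theorem isLeast_of_add_singleton_eq (h : A + {b} = C) (hc : IsLeast C c) :
    IsLeast A (c - b) :=
  ⟨(mem_iff_add_mem_of_add_singleton_eq h _).2 (by simpa using hc.1),
    fun x hx => sub_le_iff_le_add.2 (hc.2 ((mem_iff_add_mem_of_add_singleton_eq h x).1 hx))⟩

theorem isGreatest_of_add_singleton_eq (h : A + {b} = C) (hc : IsGreatest C c) :
    IsGreatest A (c - b) :=
  ⟨(mem_iff_add_mem_of_add_singleton_eq h _).2 (by simpa using hc.1),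
    fun x hx => le_sub_iff_add_le.2 (hc.2 ((mem_iff_add_mem_of_add_singleton_eq h x).1 hx))⟩

end Translate

variable {m : ℕ} {q : Fin (m + 1) → ℚ}

theorem isLeast_cell_castSucc (hq : StrictAnti q) (i : Fin (m + 1)) :
    IsLeast (cell m q i.castSucc) (q i) := by
  obtain ⟨_ | k, hk⟩ := i
  · exact isLeast_Ici
  · have hk' : k + 1 ≠ m + 1 := by omega
    simp only [cell, Fin.val_castSucc, Nat.add_one_ne_zero, if_false, hk', dif_neg,
      not_false_eq_true]
    exact isLeast_Icc (hq.antitone (Fin.mk_le_mk.2 k.le_succ))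

theorem isGreatest_cell_succ (hq : StrictAnti q) (i : Fin (m + 1)) :
    IsGreatest (cell m q i.succ) (q i) := by
  obtain ⟨k, hk⟩ := i
  rcases (Nat.lt_succ_iff.1 hk).lt_or_eq with hlt | rfl
  · have hk' : k + 1 ≠ m + 1 := by omega
    simp only [cell, Fin.val_succ, Nat.add_one_ne_zero, if_false, hk', dif_neg, not_false_eq_true]
    exact isGreatest_Icc (hq.antitone (Fin.mk_le_mk.2 k.le_succ))
  · simp only [cell, Fin.succ_mk, Nat.add_eq_zero_iff, one_ne_zero, and_false, ↓reduceIte,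
      ↓reduceDIte]
    exact isGreatest_Iic

namespace SubdivDecomp

def swap (D : SubdivDecomp m q) : SubdivDecomp m q where
  A := D.B
  B := D.A
  shapeA := D.shapeB
  shapeB := D.shapeA
  sum_eq i := by rw [add_comm]; exact D.sum_eq i
  monoA := D.monoB
  monoB := D.monoA
  coverA := D.coverB
  coverB := D.coverA

variable (D : SubdivDecomp m q)

theorem A_nonempty (i : Fin (m + 2)) : (D.A i).Nonempty := by
  rcases D.shapeA i with ⟨p, r, hpr, h⟩ | ⟨p, h⟩ | ⟨p, h⟩ <;> rw [h]
  · exact Set.nonempty_Icc.2 hpr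
  · exact Set.nonempty_Ici
  · exact Set.nonempty_Iic

theorem isLeast_A_castSucc (hq : StrictAnti q) {i : Fin (m + 1)} {β : ℚ}
    (hβ : D.B i.castSucc = {β}) : IsLeast (D.A i.castSucc) (q i - β) :=
  isLeast_of_add_singleton_eq (hβ ▸ D.sum_eq i.castSucc) (isLeast_cell_castSucc hq i)

theorem isGreatest_A_succ (hq : StrictAnti q) {i : Fin (m + 1)} {β : ℚ}
    (hβ : D.B i.succ = {β}) : IsGreatest (D.A i.succ) (q i - β) :=
  isGreatest_of_add_singleton_eq (hβ ▸ D.sum_eq i.succ) (isGreatest_cell_succ hq i)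

theorem eq_of_B_castSucc_eq_singleton_of_B_succ_eq_singleton (hq : StrictAnti q)
    {i : Fin (m + 1)} {β β' : ℚ} (hβ : D.B i.castSucc = {β}) (hβ' : D.B i.succ = {β'}) :
    β = β' := by
  have := eq_of_isLeast_castSucc_of_isGreatest_succ D.coverA D.A_nonempty D.monoA
    (D.isLeast_A_castSucc hq hβ) (D.isGreatest_A_succ hq hβ')
  linarith

theorem add_eq_of_B_castSucc_eq_singleton_of_A_succ_eq_singleton (hq : StrictAnti q)
    {i : Fin (m + 1)} {β α : ℚ} (hβ : D.B i.castSucc = {β}) (hα : D.A i.succ = {α}) :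
    α + β = q i := by
  have hα_le : α ≤ q i - β :=
    D.monoA i α (hα ▸ rfl) _ (D.isLeast_A_castSucc hq hβ).1
  have hβ_ge : q i - α ≤ β :=
    D.monoB i _ (D.swap.isGreatest_A_succ hq hα).1 β (hβ ▸ rfl)
  linarith

end SubdivDecomp

/-- The first part of the paper's Remark: for a subdivision decomposition of Ξ₀,
adjacent singleton factors on the same side agree (λ_i = λ_{i+1} when a_i = a_{i+1}),
while adjacent singleton factors on opposite sides sum to the breakpoint
(λ_i + λ_{i+1} = Δ₀^i ∩ Δ₀^{i+1} = q_i when a_i ≠ a_{i+1}). -/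
theorem decomposition_translation_data (m : ℕ) (q : Fin (m + 1) → ℚ)
    (hq : StrictAnti q) (D : SubdivDecomp m q) :
    ∀ i : Fin (m + 1),
      (∀ β β' : ℚ, D.B i.castSucc = {β} → D.B i.succ = {β'} → β = β') ∧
      (∀ α α' : ℚ, D.A i.castSucc = {α} → D.A i.succ = {α'} → α = α') ∧
      (∀ β α : ℚ, D.B i.castSucc = {β} → D.A i.succ = {α} → α + β = q i) ∧
      (∀ α β : ℚ, D.A i.castSucc = {α} → D.B i.succ = {β} → α + β = q i) := by
  intro i
  exact ⟨fun _ _ => D.eq_of_B_castSucc_eq_singleton_of_B_succ_eq_singleton hq,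
    fun _ _ => D.swap.eq_of_B_castSucc_eq_singleton_of_B_succ_eq_singleton hq,
    fun _ _ => D.add_eq_of_B_castSucc_eq_singleton_of_A_succ_eq_singleton hq,
    fun α β hα hβ => add_comm β α ▸
      D.swap.add_eq_of_B_castSucc_eq_singleton_of_A_succ_eq_singleton hq hα hβ⟩
end
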